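/- arXiv:0706.0624 — 7 statements merged into one kernel-verified Lean document; each statement's English description precedes it below -/
import Mathlib

section
/- Let X be a real normed linear space, A ⊆ X an open convex set, n a natural number, F : A → ℝⁿ a d.c. mapping, and g : ℝⁿ → ℝ a d.c. function. Then the composed function g ∘ F is d.c. on A. -/
open Set Metric Bornology Filter NNReal

/-- `f` is a control function for `F` on the convex set `C`. -/
def IsControlOn {X Y : Type*} [NormedAddCommGroup X] [NormedSpace ℝ X]
    [NormedAddCommGroup Y] [NormedSpace ℝ Y]
    (C : Set X) (F : X → Y) (f : X → ℝ) : Prop :=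
  ContinuousOn f C ∧
    ∀ φ : Y →L[ℝ] ℝ, ‖φ‖ ≤ 1 → ConvexOn ℝ C (fun x => φ (F x) + f x)

/-- `F` is a d.c. (delta-convex) mapping on `C`. -/
def IsDCOn {X Y : Type*} [NormedAddCommGroup X] [NormedSpace ℝ X]
    [NormedAddCommGroup Y] [NormedSpace ℝ Y]
    (C : Set X) (F : X → Y) : Prop :=
  ContinuousOn F C ∧ ∃ f : X → ℝ, IsControlOn C F f

/-- `g` is a d.c. function on `C`: a difference of two continuous convex functions. -/
def IsDCFnOn {X : Type*} [NormedAddCommGroup X] [NormedSpace ℝ X]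
    (C : Set X) (g : X → ℝ) : Prop :=
  ∃ p q : X → ℝ, ContinuousOn p C ∧ ContinuousOn q C ∧
    ConvexOn ℝ C p ∧ ConvexOn ℝ C q ∧ ∀ x ∈ C, g x = p x - q x

/-- `A ⊂⊂ B`: some ε-enlargement of `A` is contained in `B`. -/
def SubSub {X : Type*} [NormedAddCommGroup X] (A B : Set X) : Prop :=
  ∃ ε > (0:ℝ), ∀ a ∈ A, ∀ y : X, ‖y‖ < ε → a + y ∈ B

/-- `N` is an equivalent norm on `Y` with modulus of convexity of power type 2. -/
def IsEquivNormPT2 {Y : Type*} [NormedAddCommGroup Y] [NormedSpace ℝ Y] (N : Y → ℝ) : Prop :=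
  (∀ u v : Y, N (u + v) ≤ N u + N v) ∧
  (∀ (a : ℝ) (u : Y), N (a • u) = |a| * N u) ∧
  (∃ c₁ c₂ : ℝ, 0 < c₁ ∧ 0 < c₂ ∧ ∀ u : Y, c₁ * ‖u‖ ≤ N u ∧ N u ≤ c₂ * ‖u‖) ∧
  (∃ a : ℝ, 0 < a ∧ ∀ ε : ℝ, ε ∈ Set.Ioc (0:ℝ) 2 → ∀ u v : Y,
    N u ≤ 1 → N v ≤ 1 → ε ≤ N (u - v) → a * ε ^ 2 ≤ 1 - N ((2⁻¹ : ℝ) • (u + v)))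

/-- `G` is `C^{1,1}` on `U`: Fréchet differentiable with Lipschitz derivative. -/
def IsC11On {X Y : Type*} [NormedAddCommGroup X] [NormedSpace ℝ X]
    [NormedAddCommGroup Y] [NormedSpace ℝ Y] (U : Set X) (G : X → Y) : Prop :=
  ∃ G' : X → X →L[ℝ] Y, (∀ x ∈ U, HasFDerivAt G (G' x) x) ∧
    ∃ L : NNReal, LipschitzOnWith L G' U

/-- `F` is locally d.c. on `C`: each point of `C` has a convex neighborhood `U`
with `F` d.c. on `U ∩ C`. -/
def LocallyDCOn {X Y : Type*} [NormedAddCommGroup X] [NormedSpace ℝ X]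
    [NormedAddCommGroup Y] [NormedSpace ℝ Y] (C : Set X) (F : X → Y) : Prop :=
  ∀ a ∈ C, ∃ U : Set X, U ∈ nhds a ∧ Convex ℝ U ∧ IsDCOn (U ∩ C) F


/-!
Subtracting an affine minorant, the control `f` of `F` may be taken nonnegative. If `‖φ‖ ≤ s`,
then `φ ∘ F + s (‖F‖ + 2 f)` is convex: it is the supremum over `‖ψ‖ ≤ 1` of the convex
functions `(φ + s ψ) ∘ F + 2 s f`. A continuous convex `p` on `ℝⁿ` has at each `z` a subgradient
`φ` with `‖φ‖` bounded in terms of `‖z‖` only, so one can pick a convex nondecreasing `Φ` on `ℝ`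
whose slope at `R` dominates that bound for `‖z‖ ≤ R`. Then at every point `p ∘ F + Φ (‖F‖ + 2 f)`
lies above a convex function `φ ∘ F + s (‖F‖ + 2 f) + const` touching it there, hence is convex.
With one `Φ` serving both `p` and `q`, `g ∘ F = (p ∘ F + Φ (‖F‖ + 2 f)) - (q ∘ F + Φ (‖F‖ + 2 f))`.
-/

open scoped Topology

theorem convexOn_of_forall_exists_minorant {E : Type*} [AddCommGroup E] [Module ℝ E]
    {s : Set E} {h : E → ℝ} (hs : Convex ℝ s)
    (hmin : ∀ x ∈ s, ∃ g : E → ℝ, ConvexOn ℝ s g ∧ (∀ y ∈ s, g y ≤ h y) ∧ g x = h x) :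
    ConvexOn ℝ s h := by
  refine ⟨hs, fun x hx y hy a b ha hb hab => ?_⟩
  obtain ⟨g, hg, hgh, hgx⟩ := hmin _ (hs hx hy ha hb hab)
  calc h (a • x + b • y) = g (a • x + b • y) := hgx.symm
    _ ≤ a • g x + b • g y := hg.2 hx hy ha hb hab
    _ ≤ a • h x + b • h y := by
      gcongr
      exacts [hgh x hx, hgh y hy]

section Subgradient

variable {X : Type*} [NormedAddCommGroup X] [NormedSpace ℝ X]

theorem ConvexOn.exists_subgradient {A : Set X} {f : X → ℝ} (hA : IsOpen A)
    (hf : ConvexOn ℝ A f) (hfc : ContinuousOn f A) {y : X} (hy : y ∈ A) :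
    ∃ ℓ : X →L[ℝ] ℝ, ∀ z ∈ A, f y + ℓ (z - y) ≤ f z := by
  set S : Set (X × ℝ) := {q | q.1 ∈ A ∧ f q.1 < q.2}
  have hS : IsOpen S := by
    have hcont : ContinuousOn (fun q : X × ℝ => f q.1 - q.2) (Prod.fst ⁻¹' A) :=
      (hfc.comp continuousOn_fst fun _ hq => hq).sub continuousOn_snd
    convert hcont.isOpen_inter_preimage (hA.preimage continuous_fst)
      (isOpen_Iio (a := (0 : ℝ))) using 1
    ext q
    simp [S]
  obtain ⟨Φ, hΦ⟩ := geometric_hahn_banach_open_point hf.convex_strict_epigraph hS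
    (by simp [S] : (y, f y) ∉ S)
  have hsplit : ∀ x t, Φ (x, t) = Φ (x, 0) + t * Φ (0, 1) := by
    intro x t
    rw [← smul_eq_mul, ← map_smul, ← map_add]
    simp
  set c := Φ (0, 1)
  have hc : c < 0 := by
    have := hΦ (y, f y + 1) ⟨hy, lt_add_one _⟩
    rw [hsplit y, hsplit y (f y)] at this
    linarith
  refine ⟨(-c)⁻¹ • Φ.comp (ContinuousLinearMap.inl ℝ X ℝ), fun z hz => ?_⟩
  have hbelow : (Φ (z, 0) - Φ (y, 0)) / (-c) + f y ≤ f z := by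
    refine le_of_forall_gt_imp_ge_of_dense fun t ht => ?_
    have := hΦ (z, t) ⟨hz, ht⟩
    rw [hsplit z, hsplit y (f y)] at this
    rw [← le_sub_iff_add_le, div_le_iff₀ (by linarith)]
    nlinarith
  have hmap : Φ (z - y, 0) = Φ (z, 0) - Φ (y, 0) := by
    rw [← map_sub, Prod.mk_sub_mk, sub_zero]
  simp only [smul_apply, ContinuousLinearMap.comp_apply,
    ContinuousLinearMap.inl_apply, smul_eq_mul, hmap]
  rw [← div_eq_inv_mul]
  linarith

theorem norm_le_of_subgradient_of_abs_le {p : X → ℝ} {z : X} {φ : X →L[ℝ] ℝ} {M : ℝ}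
    (hφ : ∀ w, p z + φ (w - z) ≤ p w) (hM : ∀ w ∈ closedBall z 1, |p w| ≤ M) :
    ‖φ‖ ≤ 2 * M := by
  have hpz := abs_le.mp (hM z (mem_closedBall_self zero_le_one))
  have hslope : ∀ v : X, ‖v‖ = 1 → φ v ≤ 2 * M := by
    intro v hv
    have hzv := abs_le.mp (hM (z + v) (by simp [hv]))
    have := hφ (z + v)
    rw [add_sub_cancel_left] at this
    linarith
  refine ContinuousLinearMap.opNorm_le_of_unit_norm (by linarith) fun v hv => ?_
  have := hslope (-v) (by rw [norm_neg, hv])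
  rw [map_neg] at this
  exact abs_le.mpr ⟨by linarith, hslope v hv⟩

end Subgradient

theorem ConvexOn.exists_subgradient_norm_le_floor {E : Type*} [NormedAddCommGroup E]
    [NormedSpace ℝ E] [ProperSpace E] {p : E → ℝ} (hp : ConvexOn ℝ univ p)
    (hpc : Continuous p) :
    ∃ c : ℕ → ℝ, (∀ k, 0 ≤ c k) ∧
      ∀ z, ∃ φ : E →L[ℝ] ℝ, ‖φ‖ ≤ c ⌊‖z‖⌋₊ ∧ ∀ w, p z + φ (w - z) ≤ p w := by
  have hbound : ∀ k : ℕ, ∃ M, ∀ w ∈ closedBall (0 : E) (k + 2), |p w| ≤ M := fun k =>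
    (isCompact_closedBall _ _).exists_bound_of_continuousOn hpc.continuousOn
  choose M hM using hbound
  refine ⟨fun k => 2 * M k, fun k => ?_, fun z => ?_⟩
  · have := hM k 0 (by rw [mem_closedBall_zero_iff, norm_zero]; positivity)
    linarith [abs_nonneg (p 0)]
  obtain ⟨φ, hφ⟩ := hp.exists_subgradient isOpen_univ hpc.continuousOn (mem_univ z)
  refine ⟨φ, norm_le_of_subgradient_of_abs_le (fun w => hφ w trivial) fun w hw => hM _ w ?_,
    fun w => hφ w trivial⟩
  rw [mem_closedBall, dist_eq_norm] at hw
  rw [mem_closedBall_zero_iff]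
  linarith [norm_le_norm_add_norm_sub' w z, Nat.lt_floor_add_one ‖z‖]

namespace IsControlOn

variable {X Y : Type*} [NormedAddCommGroup X] [NormedSpace ℝ X]
  [NormedAddCommGroup Y] [NormedSpace ℝ Y] {C : Set X} {F : X → Y} {f : X → ℝ}

theorem convexOn (h : IsControlOn C F f) : ConvexOn ℝ C f := by
  simpa using h.2 0 (by simp)

theorem convexOn_add_norm_mul (h : IsControlOn C F f) (φ : Y →L[ℝ] ℝ) :
    ConvexOn ℝ C (fun x => φ (F x) + ‖φ‖ * f x) := by
  rcases eq_or_ne φ 0 with rfl | hφ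
  · simpa using convexOn_const (0 : ℝ) h.convexOn.1
  have hpos : 0 < ‖φ‖ := norm_pos_iff.mpr hφ
  have hunit : ‖‖φ‖⁻¹ • φ‖ ≤ 1 := by
    rw [norm_smul, norm_inv, norm_norm, inv_mul_cancel₀ hpos.ne']
  refine ((h.2 _ hunit).smul hpos.le).congr fun x _ => ?_
  simp only [smul_apply, smul_eq_mul]
  field_simp

theorem convexOn_add_mul_norm_add (h : IsControlOn C F f) {φ : Y →L[ℝ] ℝ} {s : ℝ}
    (hs : ‖φ‖ ≤ s) : ConvexOn ℝ C (fun x => φ (F x) + s * (‖F x‖ + 2 * f x)) := by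
  refine convexOn_of_forall_exists_minorant h.convexOn.1 fun x₀ _ => ?_
  obtain ⟨ψ, hψ, hψx₀⟩ := exists_dual_vector'' ℝ (F x₀)
  have hs₀ : 0 ≤ s := (norm_nonneg φ).trans hs
  set χ := φ + s • ψ
  have hχ : ‖χ‖ ≤ 2 * s := calc
    ‖χ‖ ≤ ‖φ‖ + |s| * ‖ψ‖ := (norm_add_le _ _).trans_eq (by rw [norm_smul, Real.norm_eq_abs])
    _ ≤ s + s * 1 := by rw [abs_of_nonneg hs₀]; gcongr
    _ = 2 * s := by ring
  refine ⟨fun x => (χ (F x) + ‖χ‖ * f x) + (2 * s - ‖χ‖) • f x,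
    (h.convexOn_add_norm_mul χ).add (h.convexOn.smul (by linarith)), fun x _ => ?_, ?_⟩
  · have hψF : ψ (F x) ≤ ‖F x‖ := by
      simpa using (le_abs_self _).trans (ψ.le_of_opNorm_le hψ (F x))
    simp only [χ, add_apply, smul_apply, smul_eq_mul]
    nlinarith
  · simp only [χ, add_apply, smul_apply, smul_eq_mul, hψx₀, RCLike.ofReal_real_eq_id, id_eq]
    ring

theorem exists_nonneg (hC : IsOpen C) (h : IsControlOn C F f) :
    ∃ f' : X → ℝ, IsControlOn C F f' ∧ ∀ x ∈ C, 0 ≤ f' x := by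
  rcases C.eq_empty_or_nonempty with rfl | ⟨y, hy⟩
  · exact ⟨f, h, by simp⟩
  obtain ⟨ℓ, hℓ⟩ := h.convexOn.exists_subgradient hC h.1 hy
  refine ⟨fun x => f x - (f y + ℓ (x - y)), ⟨h.1.sub (by fun_prop), fun φ hφ => ?_⟩,
    fun x hx => sub_nonneg.mpr (hℓ x hx)⟩
  refine (((h.2 φ hφ).add ((-ℓ : X →L[ℝ] ℝ).toLinearMap.convexOn h.convexOn.1)).add_const
    (ℓ y - f y)).congr fun x _ => ?_
  simp only [Pi.add_apply, ContinuousLinearMap.coe_coe, neg_apply, map_sub]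
  ring

end IsControlOn

/-- The convex piecewise-linear function on `ℝ` vanishing on `(-∞, 0]` whose slope increases by
`c k` at each natural number `k`. -/
noncomputable def rampSum (c : ℕ → ℝ) (t : ℝ) : ℝ :=
  ∑ᶠ k : ℕ, c k * max (t - k) 0

theorem rampSum_eq_sum_range (c : ℕ → ℝ) {t : ℝ} {N : ℕ} (ht : t ≤ N) :
    rampSum c t = ∑ k ∈ Finset.range N, c k * max (t - k) 0 := by
  refine finsum_eq_sum_of_support_subset _ fun k hk => ?_
  simp only [Finset.coe_range, mem_Iio]
  by_contra! hNk
  have : t - k ≤ 0 := by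
    have : (N : ℝ) ≤ k := by exact_mod_cast hNk
    linarith
  simp [max_eq_right this] at hk

theorem continuous_rampSum (c : ℕ → ℝ) : Continuous (rampSum c) := by
  refine continuous_iff_continuousAt.mpr fun t₀ => ?_
  set N := ⌈t₀⌉₊ + 1
  have hlocal :
      (fun t : ℝ => ∑ k ∈ Finset.range N, c k * max (t - k) 0) =ᶠ[𝓝 t₀] rampSum c := by
    have : t₀ < N := by
      push_cast [N]
      linarith [Nat.le_ceil t₀]
    filter_upwards [Iio_mem_nhds this] with t ht
    exact (rampSum_eq_sum_range c (le_of_lt ht)).symm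
  exact ((continuous_finsetSum _ fun k _ => by fun_prop).continuousAt).congr hlocal

theorem rampSum_add_mul_sub_le {c : ℕ → ℝ} (hc : ∀ k, 0 ≤ c k) {R : ℝ} (hR : 0 ≤ R) (u : ℝ) :
    rampSum c R + (∑ k ∈ Finset.range (⌊R⌋₊ + 1), c k) * (u - R) ≤ rampSum c u := by
  set m := ⌊R⌋₊ + 1
  set N := m + ⌈u⌉₊
  have hRN : R ≤ N := by
    have : R < m := by push_cast [m]; exact Nat.lt_floor_add_one R
    have : (m : ℝ) ≤ N := by exact_mod_cast Nat.le_add_right m _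
    linarith
  have huN : u ≤ N := (Nat.le_ceil u).trans (by exact_mod_cast Nat.le_add_left _ m)
  rw [rampSum_eq_sum_range c hRN, rampSum_eq_sum_range c huN,
    ← Finset.sum_range_add_sum_Ico _ (Nat.le_add_right m _),
    ← Finset.sum_range_add_sum_Ico _ (Nat.le_add_right m _), Finset.sum_mul]
  have hlow : ∀ k ∈ Finset.range m,
      c k * max (R - k) 0 + c k * (u - R) ≤ c k * max (u - k) 0 := by
    intro k hk
    have hkR : (k : ℝ) ≤ R :=
      (Nat.cast_le.mpr (Nat.lt_succ_iff.mp (Finset.mem_range.mp hk))).trans (Nat.floor_le hR)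
    rw [max_eq_left (by linarith), ← mul_add]
    exact mul_le_mul_of_nonneg_left (by simp) (hc k)
  have hhigh : ∀ k ∈ Finset.Ico m N, c k * max (R - k) 0 ≤ c k * max (u - k) 0 := by
    intro k hk
    have hRk : R < k := by
      have := Nat.lt_floor_add_one R
      have : (m : ℝ) ≤ k := by exact_mod_cast (Finset.mem_Ico.mp hk).1
      push_cast [m] at this
      linarith
    rw [max_eq_right (by linarith), mul_zero]
    exact mul_nonneg (hc k) (le_max_right _ _)
  have hlow_sum := Finset.sum_le_sum hlow
  have hhigh_sum := Finset.sum_le_sum hhigh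
  rw [Finset.sum_add_distrib] at hlow_sum
  linarith

theorem IsControlOn.convexOn_comp_add_rampSum {X Y : Type*} [NormedAddCommGroup X]
    [NormedSpace ℝ X] [NormedAddCommGroup Y] [NormedSpace ℝ Y] {C : Set X} {F : X → Y}
    {f : X → ℝ} (hctl : IsControlOn C F f) (hf : ∀ x ∈ C, 0 ≤ f x) {c : ℕ → ℝ}
    (hc : ∀ k, 0 ≤ c k) {p : Y → ℝ}
    (hp : ∀ z, ∃ φ : Y →L[ℝ] ℝ, ‖φ‖ ≤ c ⌊‖z‖⌋₊ ∧ ∀ w, p z + φ (w - z) ≤ p w) :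
    ConvexOn ℝ C (fun x => p (F x) + rampSum c (‖F x‖ + 2 * f x)) := by
  refine convexOn_of_forall_exists_minorant hctl.convexOn.1 fun x₀ hx₀ => ?_
  obtain ⟨φ, hφ, hsub⟩ := hp (F x₀)
  set R := ‖F x₀‖ + 2 * f x₀
  have hR : ‖F x₀‖ ≤ R := by linarith [hf x₀ hx₀]
  set s := ∑ k ∈ Finset.range (⌊R⌋₊ + 1), c k
  have hφs : ‖φ‖ ≤ s := hφ.trans <| Finset.single_le_sum (fun k _ => hc k) <|
    Finset.mem_range.mpr (Nat.lt_succ_of_le (Nat.floor_le_floor hR))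
  refine ⟨fun x => φ (F x) + s * (‖F x‖ + 2 * f x) + (p (F x₀) - φ (F x₀) + rampSum c R - s * R),
    (hctl.convexOn_add_mul_norm_add hφs).add_const _, fun x _ => ?_, by ring⟩
  have hp_ge := hsub (F x)
  have hramp_ge := rampSum_add_mul_sub_le hc ((norm_nonneg _).trans hR) (‖F x‖ + 2 * f x)
  rw [map_sub] at hp_ge
  rw [mul_sub] at hramp_ge
  linarith

theorem dc_comp_finite_dim_target_general {X : Type*} [NormedAddCommGroup X] [NormedSpace ℝ X]
    (A : Set X) (hAopen : IsOpen A) (n : ℕ)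
    (F : X → EuclideanSpace ℝ (Fin n)) (hF : IsDCOn A F)
    (g : EuclideanSpace ℝ (Fin n) → ℝ) (hg : IsDCFnOn (Set.univ) g) :
    IsDCFnOn A (g ∘ F) := by
  obtain ⟨hFc, f₀, hctl₀⟩ := hF
  obtain ⟨f, hctl, hf⟩ := hctl₀.exists_nonneg hAopen
  obtain ⟨p, q, hpc, hqc, hp, hq, hpq⟩ := hg
  rw [continuousOn_univ] at hpc hqc
  obtain ⟨cp, hcp, hpφ⟩ := hp.exists_subgradient_norm_le_floor hpc
  obtain ⟨cq, hcq, hqφ⟩ := hq.exists_subgradient_norm_le_floor hqc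
  have hc : ∀ k, 0 ≤ (cp + cq) k := fun k => add_nonneg (hcp k) (hcq k)
  set ψ := fun x => rampSum (cp + cq) (‖F x‖ + 2 * f x)
  have hψ : ContinuousOn ψ A :=
    (continuous_rampSum _).comp_continuousOn (hFc.norm.add (continuousOn_const.mul hctl.1))
  refine ⟨fun x => p (F x) + ψ x, fun x => q (F x) + ψ x, (hpc.comp_continuousOn hFc).add hψ,
    (hqc.comp_continuousOn hFc).add hψ, hctl.convexOn_comp_add_rampSum hf hc fun z => ?_,
    hctl.convexOn_comp_add_rampSum hf hc fun z => ?_, fun x _ => by simp [hpq]⟩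
  · obtain ⟨φ, hφ, hsub⟩ := hpφ z
    exact ⟨φ, hφ.trans (le_add_of_nonneg_right (hcq _)), hsub⟩
  · obtain ⟨φ, hφ, hsub⟩ := hqφ z
    exact ⟨φ, hφ.trans (le_add_of_nonneg_left (hcp _)), hsub⟩

/-- If `F : A → ℝⁿ` is d.c. on the open convex set `A` and
`g : ℝⁿ → ℝ` is d.c., then `g ∘ F` is d.c. on `A`. -/
theorem dc_comp_finite_dim_target {X : Type*} [NormedAddCommGroup X] [NormedSpace ℝ X]
    (A : Set X) (hAopen : IsOpen A) (hAconv : Convex ℝ A) (n : ℕ)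
    (F : X → EuclideanSpace ℝ (Fin n)) (hF : IsDCOn A F)
    (g : EuclideanSpace ℝ (Fin n) → ℝ) (hg : IsDCFnOn (Set.univ) g) :
    IsDCFnOn A (g ∘ F) :=
  dc_comp_finite_dim_target_general A hAopen n F hF g hg
end

section
/- Let X be a reflexive real Banach space, C ⊆ X an open convex set, f : C → ℝ a continuous convex function, and I ⊆ ℝ an open interval containing f(C). Then for every real normed linear space Z and every d.c. mapping G : I → Z, the composed map G ∘ f is d.c. on C. -/
/-!
For a control function `g` of `G`, the convex functions `h_φ = φ ∘ G + g` (`‖φ‖ ≤ 1`) can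
decrease to the right of a point `t₀ ∈ I` at most at a rate `c(t₀)` independent of `φ`.
Let `ρ` be a continuous convex exhaustion function of `C`. Since `X` is reflexive, `f` attains
its minimum `t_n` on each bounded closed convex sublevel set `{ρ ≤ n + 1}`, so `t_n ∈ I` (an
unattained infimum could be an endpoint of the open interval `I`). Take a convex nondecreasing
`A` with `exp (t_n + A n) ≥ c(t_n)`. The convex function `exp (f + A ∘ ρ)` then grows along
convex combinations at least as fast as `h_φ ∘ f` can drop, so `g ∘ f + exp (f + A ∘ ρ)` is a
control function for `G ∘ f`.
-/

open Set Metric Bornology Filter NNReal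

open Real

section WeakCompactness

variable {X : Type*} [NormedAddCommGroup X] [NormedSpace ℝ X]

theorem Convex.isClosed_image_toWeakSpace {s : Set X} (hs : Convex ℝ s) (hc : IsClosed s) :
    IsClosed (toWeakSpace ℝ X '' s) := by
  rw [← closure_eq_iff_isClosed, ← hs.toWeakSpace_closure ℝ, hc.closure_eq]

theorem isCompact_image_toWeakSpace_of_reflexive
    (hrefl : Function.Surjective (NormedSpace.inclusionInDoubleDual ℝ X)) {K : Set X}
    (hKb : IsBounded K) (hKc : IsClosed K) (hKconv : Convex ℝ K) :
    IsCompact (toWeakSpace ℝ X '' K) := by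
  rw [← (hKconv.isClosed_image_toWeakSpace hKc).closure_eq]
  refine NormedSpace.isCompact_closure_of_isBounded ℝ X _
    (by rwa [(toWeakSpace ℝ X).injective.preimage_image]) ?_
  rintro φ -
  obtain ⟨x, hx⟩ := hrefl (WeakDual.toStrongDual φ)
  exact ⟨toWeakSpace ℝ X x, by
    rw [← WeakDual.toWeakDual_toStrongDual φ, ← hx]; rfl⟩

theorem ConvexOn.exists_isMinOn_of_reflexive
    (hrefl : Function.Surjective (NormedSpace.inclusionInDoubleDual ℝ X)) {K : Set X} {f : X → ℝ}
    (hf : ConvexOn ℝ K f) (hfc : ContinuousOn f K) (hne : K.Nonempty) (hKb : IsBounded K)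
    (hKc : IsClosed K) : ∃ x ∈ K, IsMinOn f K x := by
  set e := toWeakSpace ℝ X
  have hlsc : LowerSemicontinuousOn (f ∘ e.symm) (e '' K) := by
    refine lowerSemicontinuousOn_iff_preimage_Iic.2 fun b => ⟨e '' {x ∈ K | f x ≤ b},
      (hf.convex_le b).isClosed_image_toWeakSpace
        (hfc.preimage_isClosed_of_isClosed hKc isClosed_Iic), ?_⟩
    ext y
    constructor
    · rintro ⟨⟨x, hx, rfl⟩, hfx⟩
      exact ⟨⟨x, hx, rfl⟩, x, ⟨hx, by simpa using hfx⟩, rfl⟩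
    · rintro ⟨hy, x, ⟨hx, hfx⟩, rfl⟩
      exact ⟨hy, by simpa using hfx⟩
  obtain ⟨_, ⟨x, hx, rfl⟩, hmin⟩ := hlsc.exists_isMinOn (hne.image e)
    (isCompact_image_toWeakSpace_of_reflexive hrefl hKb hKc hf.1)
  exact ⟨x, hx, fun y hy => by simpa using hmin ⟨y, hy, rfl⟩⟩

end WeakCompactness

theorem ConcaveOn.convexOn_inv {E : Type*} [AddCommGroup E] [Module ℝ E] {s : Set E} {g : E → ℝ}
    (hg : ConcaveOn ℝ s g) (hpos : ∀ x ∈ s, 0 < g x) : ConvexOn ℝ s fun x => (g x)⁻¹ := by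
  refine ⟨hg.1, fun x hx y hy a b ha hb hab => ?_⟩
  have hinv := (convexOn_zpow (𝕜 := ℝ) (-1)).2 (hpos x hx) (hpos y hy) ha hb hab
  simp only [zpow_neg_one, smul_eq_mul] at hinv ⊢
  exact (inv_anti₀ (convex_Ioi 0 (hpos x hx) (hpos y hy) ha hb hab) (hg.2 hx hy ha hb hab)).trans
    hinv

section Exhaustion

variable {X : Type*} [NormedAddCommGroup X] [NormedSpace ℝ X]

theorem exists_continuous_convexOn_eq_setOf_lt_one {C : Set X} (hCo : IsOpen C)
    (hCc : Convex ℝ C) :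
    ∃ p : X → ℝ, Continuous p ∧ ConvexOn ℝ univ p ∧ C = {x | p x < 1} := by
  rcases C.eq_empty_or_nonempty with rfl | ⟨x₀, hx₀⟩
  · exact ⟨fun _ => 1, continuous_const, convexOn_const 1 convex_univ, by simp⟩
  set s := (x₀ + ·) ⁻¹' C
  have hs : Convex ℝ s := hCc.translate_preimage_right x₀
  have hs₀ : s ∈ nhds 0 := (hCo.preimage (continuous_const_add x₀)).mem_nhds (by simpa [s])
  refine ⟨fun x => gauge s (x - x₀), (continuous_gauge hs hs₀).comp (continuous_sub_right x₀),
    ⟨convex_univ, fun x _ y _ a b ha hb hab => ?_⟩, ?_⟩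
  · have hx : a • x + b • y - x₀ = a • (x - x₀) + b • (y - x₀) := by
      calc a • x + b • y - x₀ = a • x + b • y - (a + b) • x₀ := by rw [hab, one_smul]
        _ = a • (x - x₀) + b • (y - x₀) := by module
    simp only [smul_eq_mul, hx]
    calc gauge s (a • (x - x₀) + b • (y - x₀))
        ≤ gauge s (a • (x - x₀)) + gauge s (b • (y - x₀)) :=
          gauge_add_le hs (absorbent_nhds_zero hs₀) _ _
      _ = a * gauge s (x - x₀) + b * gauge s (y - x₀) := by
          rw [gauge_smul_of_nonneg ha, gauge_smul_of_nonneg hb, smul_eq_mul, smul_eq_mul]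
  · ext x
    rw [mem_ofPred_eq, gauge_lt_one_iff_mem_interior hs hs₀,
      (hCo.preimage (continuous_const_add x₀)).interior_eq]
    simp

theorem exists_convex_exhaustion {C : Set X} (hCo : IsOpen C) (hCc : Convex ℝ C) :
    ∃ ρ : X → ℝ, ContinuousOn ρ C ∧ ConvexOn ℝ C ρ ∧ (∀ x, 0 ≤ ρ x) ∧
      ∀ r > 0, IsClosed {x ∈ C | ρ x ≤ r} ∧ IsBounded {x ∈ C | ρ x ≤ r} := by
  obtain ⟨p, hpc, hpconv, rfl⟩ := exists_continuous_convexOn_eq_setOf_lt_one hCo hCc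
  have hpos : ∀ x ∈ {x | p x < 1}, 0 < 1 - p x := fun x hx => sub_pos.2 hx
  have hinv : ConvexOn ℝ {x | p x < 1} fun x => (1 - p x)⁻¹ := by
    refine ((concaveOn_const 1 ?_).sub (hpconv.subset (subset_univ _) ?_)).convexOn_inv hpos <;>
      simpa using hpconv.convex_lt 1
  refine ⟨fun x => max ‖x‖ (1 - p x)⁻¹, continuous_norm.continuousOn.sup
    ((continuous_const.sub hpc).continuousOn.inv₀ fun x hx => (hpos x hx).ne'),
    (convexOn_norm hinv.1).sup hinv, fun x => (norm_nonneg x).trans (le_max_left _ _),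
    fun r hr => ?_⟩
  have hsub : {x ∈ {x | p x < 1} | max ‖x‖ (1 - p x)⁻¹ ≤ r} =
      closedBall 0 r ∩ {x | p x ≤ 1 - r⁻¹} := by
    ext x
    simp only [mem_ofPred_eq, mem_inter_iff, mem_closedBall_zero_iff, max_le_iff]
    constructor
    · rintro ⟨hx, hxr, hpr⟩
      exact ⟨hxr, by rw [inv_le_comm₀ (hpos x hx) hr] at hpr; linarith⟩
    · rintro ⟨hxr, hpr⟩
      have hx : p x < 1 := by linarith [inv_pos.2 hr]
      exact ⟨hx, hxr, by rw [inv_le_comm₀ (hpos x hx) hr]; linarith⟩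
  rw [hsub]
  exact ⟨isClosed_closedBall.inter (isClosed_le hpc continuous_const),
    isBounded_closedBall.subset inter_subset_left⟩

end Exhaustion

open Finset in
theorem exists_convexOn_monotone_ge (B : ℕ → ℝ) :
    ∃ A : ℝ → ℝ, ConvexOn ℝ univ A ∧ Monotone A ∧ ∀ n : ℕ, B n ≤ A n := by
  set M : ℕ → ℝ := fun n => ∑ k ∈ range (n + 1), |B k|
  have hM₀ : ∀ n, 0 ≤ M n := fun n => sum_nonneg fun k _ => abs_nonneg (B k)
  have hM : Monotone M := fun m n hmn => sum_le_sum_of_subset_of_nonneg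
    (range_subset_range.2 (by omega)) fun k _ _ => abs_nonneg (B k)
  set L : ℕ → ℝ → ℝ := fun n r => M n * (r - n + 1)
  have hL : ∀ r, BddAbove (Set.range fun n => L n r) := by
    refine fun r => ⟨M ⌈r⌉₊ * (|r| + 1), ?_⟩
    rintro _ ⟨n, rfl⟩
    have hbound : 0 ≤ M ⌈r⌉₊ * (|r| + 1) := mul_nonneg (hM₀ _) (by positivity)
    by_cases h : r - n + 1 ≤ 0
    · exact (mul_nonpos_of_nonneg_of_nonpos (hM₀ n) h).trans hbound
    · have hn : n ≤ ⌈r⌉₊ := by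
        have hceil := Nat.le_ceil r
        exact Nat.lt_succ_iff.1 (by exact_mod_cast (show (n : ℝ) < ⌈r⌉₊ + 1 by linarith))
      exact mul_le_mul (hM hn) (by linarith [le_abs_self r, n.cast_nonneg (α := ℝ)])
        (by linarith) (hM₀ _)
  refine ⟨fun r => ⨆ n, L n r, ⟨convex_univ, fun x _ y _ a b ha hb hab => ciSup_le fun n => ?_⟩,
    fun r s hrs => ciSup_le fun n => ?_, fun n => ?_⟩
  · calc L n (a • x + b • y) = a * L n x + b * L n y := by
          simp only [L, smul_eq_mul]; linear_combination (M n * (1 - n)) * hab.symm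
      _ ≤ a * (⨆ n, L n x) + b * (⨆ n, L n y) := by
          gcongr <;> exact le_ciSup (hL _) n
  · exact (mul_le_mul_of_nonneg_left (by linarith) (hM₀ n)).trans (le_ciSup (hL s) n)
  · calc B n ≤ M n := (le_abs_self _).trans
          (single_le_sum (fun k _ => abs_nonneg (B k)) (self_mem_range_succ n))
      _ = L n n := by simp [L]
      _ ≤ ⨆ m, L m n := le_ciSup (hL n) n

theorem ConvexOn.sub_le_slope_mul_sub {I : Set ℝ} {h : ℝ → ℝ} (hh : ConvexOn ℝ I h)
    {t₁ t₀ t s : ℝ} (ht₁ : t₁ ∈ I) (ht₀ : t₀ ∈ I) (ht : t ∈ I) (hs : s ∈ I) (h₁₀ : t₁ < t₀)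
    (h₀ : t₀ ≤ t) (hts : t ≤ s) :
    h t - h s ≤ (h t₁ - h t₀) / (t₀ - t₁) * (s - t) := by
  rcases hts.eq_or_lt with rfl | hts
  · simp
  have h₁ := hh.secant_mono ht₁ ht₀ hs h₁₀.ne' (by linarith) (by linarith)
  have h₂ := hh.secant_mono hs ht₁ ht (by linarith) hts.ne (by linarith)
  rw [← neg_sub (h s), ← neg_sub s, neg_div_neg_eq, ← neg_sub (h s) (h t), ← neg_sub s t,
    neg_div_neg_eq] at h₂
  have key := h₁.trans h₂
  rw [le_div_iff₀ (sub_pos.2 hts)] at key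
  rw [← neg_sub (h t₀), neg_div]
  nlinarith

theorem exists_uniform_slope_bound {Z : Type*} [NormedAddCommGroup Z] [NormedSpace ℝ Z]
    {I : Set ℝ} (hIo : IsOpen I) {G : ℝ → Z} {g : ℝ → ℝ}
    (hctrl : ∀ φ : Z →L[ℝ] ℝ, ‖φ‖ ≤ 1 → ConvexOn ℝ I fun t => φ (G t) + g t)
    {t₀ : ℝ} (ht₀ : t₀ ∈ I) :
    ∃ c : ℝ, ∀ φ : Z →L[ℝ] ℝ, ‖φ‖ ≤ 1 → ∀ t ∈ I, ∀ s ∈ I, t₀ ≤ t → t ≤ s →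
      φ (G t) + g t - (φ (G s) + g s) ≤ c * (s - t) := by
  obtain ⟨l, hl, hI⟩ := exists_Ioc_subset_of_mem_nhds (hIo.mem_nhds ht₀) ⟨t₀ - 1, by linarith⟩
  obtain ⟨t₁, hlt₁, h₁₀⟩ := exists_between hl
  have ht₁ : t₁ ∈ I := hI ⟨hlt₁, h₁₀.le⟩
  refine ⟨(‖G t₁ - G t₀‖ + (g t₁ - g t₀)) / (t₀ - t₁), fun φ hφ t ht s hs h₀ hts =>
    ((hctrl φ hφ).sub_le_slope_mul_sub ht₁ ht₀ ht hs h₁₀ h₀ hts).trans ?_⟩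
  have hφG : φ (G t₁) - φ (G t₀) ≤ ‖G t₁ - G t₀‖ := by
    rw [← map_sub]
    simpa using (le_abs_self _).trans (φ.le_of_opNorm_le hφ (G t₁ - G t₀))
  gcongr
  linarith

theorem ConvexOn.comp_add_exp_add {E : Type*} [AddCommGroup E] [Module ℝ E] {C : Set E}
    {I : Set ℝ} {f D : E → ℝ} {h : ℝ → ℝ} (hf : ConvexOn ℝ C f) (hD : ConvexOn ℝ C D)
    (hh : ConvexOn ℝ I h) (hfI : MapsTo f C I)
    (hslope : ∀ z ∈ C, ∀ s ∈ I, f z ≤ s → h (f z) - h s ≤ exp (f z + D z) * (s - f z)) :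
    ConvexOn ℝ C fun x => h (f x) + exp (f x + D x) := by
  refine ⟨hf.1, fun x hx y hy a b ha hb hab => ?_⟩
  set z := a • x + b • y
  set T := fun x => f x + D x
  have hs : a * f x + b * f y ∈ I := hh.1 (hfI hx) (hfI hy) ha hb hab
  have hfz : f z ≤ a * f x + b * f y := hf.2 hx hy ha hb hab
  have hDz : D z ≤ a * D x + b * D y := hD.2 hx hy ha hb hab
  have hhs : h (a * f x + b * f y) ≤ a * h (f x) + b * h (f y) :=
    hh.2 (hfI hx) (hfI hy) ha hb hab
  have hexp : exp (a * T x + b * T y) ≤ a * exp (T x) + b * exp (T y) :=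
    convexOn_exp.2 (mem_univ _) (mem_univ _) ha hb hab
  have htangent : exp (T z) * (a * T x + b * T y - T z + 1) ≤ exp (a * T x + b * T y) := by
    calc exp (T z) * (a * T x + b * T y - T z + 1)
        ≤ exp (T z) * exp (a * T x + b * T y - T z) := by gcongr; exact add_one_le_exp _
      _ = exp (a * T x + b * T y) := by rw [← exp_add]; ring_nf
  have hslope' := hslope z (hf.1 hx hy ha hb hab) _ hs hfz
  have hmul : exp (T z) * (a * f x + b * f y - f z) ≤ exp (T z) * (a * T x + b * T y - T z) :=
    mul_le_mul_of_nonneg_left (by simp only [T]; linarith) (exp_pos _).le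
  change h (f z) + exp (T z) ≤ a * (h (f x) + exp (T x)) + b * (h (f y) + exp (T y))
  linarith

theorem ConvexOn.comp_convexOn_of_monotone {E : Type*} [AddCommGroup E] [Module ℝ E] {s : Set E}
    {f : E → ℝ} {g : ℝ → ℝ} (hg : ConvexOn ℝ univ g) (hf : ConvexOn ℝ s f) (hg' : Monotone g) :
    ConvexOn ℝ s (g ∘ f) :=
  ⟨hf.1, fun _ hx _ hy _ _ ha hb hab =>
    (hg' (hf.2 hx hy ha hb hab)).trans (hg.2 trivial trivial ha hb hab)⟩

theorem exists_exp_slope_bound {X Z : Type*} [NormedAddCommGroup X] [NormedSpace ℝ X]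
    [NormedAddCommGroup Z] [NormedSpace ℝ Z]
    (hrefl : Function.Surjective (NormedSpace.inclusionInDoubleDual ℝ X)) {K : Set X}
    (hKb : IsBounded K) (hKc : IsClosed K) {f : X → ℝ} (hf : ConvexOn ℝ K f)
    (hfc : ContinuousOn f K) {I : Set ℝ} (hIo : IsOpen I) (hfI : MapsTo f K I) {G : ℝ → Z}
    {g : ℝ → ℝ} (hctrl : ∀ φ : Z →L[ℝ] ℝ, ‖φ‖ ≤ 1 → ConvexOn ℝ I fun t => φ (G t) + g t) :
    ∃ b : ℝ, ∀ b' ≥ b, ∀ z ∈ K, ∀ φ : Z →L[ℝ] ℝ, ‖φ‖ ≤ 1 → ∀ s ∈ I, f z ≤ s →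
      φ (G (f z)) + g (f z) - (φ (G s) + g s) ≤ exp (f z + b') * (s - f z) := by
  rcases K.eq_empty_or_nonempty with rfl | hne
  · exact ⟨0, by simp⟩
  obtain ⟨x₀, hx₀, hmin⟩ := hf.exists_isMinOn_of_reflexive hrefl hfc hne hKb hKc
  obtain ⟨c, hc⟩ := exists_uniform_slope_bound hIo hctrl (hfI hx₀)
  refine ⟨|c| - f x₀, fun b' hb' z hz φ hφ s hs hzs => (hc φ hφ _ (hfI hz) s hs (hmin hz) hzs).trans
    (mul_le_mul_of_nonneg_right ?_ (sub_nonneg.2 hzs))⟩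
  calc c ≤ |c| + 1 := by linarith [le_abs_self c]
    _ ≤ exp |c| := add_one_le_exp _
    _ ≤ exp (f z + b') := exp_le_exp.2 (by linarith [isMinOn_iff.1 hmin z hz])

theorem dc_comp_convex_reflexive_general {X Z : Type*}
    [NormedAddCommGroup X] [NormedSpace ℝ X]
    [NormedAddCommGroup Z] [NormedSpace ℝ Z]
    (hrefl : Function.Surjective (NormedSpace.inclusionInDoubleDual ℝ X))
    (C : Set X) (hCopen : IsOpen C) (hCconv : Convex ℝ C)
    (f : X → ℝ) (hfcont : ContinuousOn f C) (hfconv : ConvexOn ℝ C f)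
    (I : Set ℝ) (hIopen : IsOpen I) (hfI : f '' C ⊆ I)
    (G : ℝ → Z) (hG : IsDCOn I G) :
    IsDCOn C (G ∘ f) := by
  obtain ⟨hGcont, g, hgcont, hctrl⟩ := hG
  replace hfI : MapsTo f C I := mapsTo_iff_image_subset.2 hfI
  obtain ⟨ρ, hρcont, hρconv, hρ₀, hρK⟩ := exists_convex_exhaustion hCopen hCconv
  have hK (n : ℕ) := hρK _ n.cast_add_one_pos
  choose B hB using fun n : ℕ =>
    exists_exp_slope_bound hrefl (hK n).2 (hK n).1
      (hfconv.subset (sep_subset _ _) (hρconv.convex_le _)) (hfcont.mono (sep_subset _ _)) hIopen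
      (hfI.mono_left (sep_subset _ _)) hctrl
  obtain ⟨A, hAconv, hAmono, hBA⟩ := exists_convexOn_monotone_ge B
  have hAcont : Continuous A := continuousOn_univ.1 (hAconv.continuousOn isOpen_univ)
  refine ⟨hGcont.comp hfcont hfI, fun x => g (f x) + exp (f x + A (ρ x)),
    (hgcont.comp hfcont hfI).add (continuous_exp.comp_continuousOn
      (hfcont.add (hAcont.comp_continuousOn hρcont))), fun φ hφ => ?_⟩
  -- on `{ρ ≤ ⌊ρ z⌋₊ + 1}` the shift `B ⌊ρ z⌋₊ ≤ A (ρ z)` is large enough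
  have := hfconv.comp_add_exp_add (hAconv.comp_convexOn_of_monotone hρconv hAmono) (hctrl φ hφ) hfI
    fun z hz s hs hzs => hB ⌊ρ z⌋₊ (A (ρ z)) ((hBA _).trans (hAmono (Nat.floor_le (hρ₀ z)))) z
      ⟨hz, (Nat.lt_floor_add_one _).le⟩ φ hφ s hs hzs
  simpa only [add_assoc, Function.comp_apply] using this

/-- In a reflexive Banach space, the composition of a d.c. mapping on an
open interval `I` with a continuous convex function whose range lies in `I` is d.c. -/
theorem dc_comp_convex_reflexive {X Z : Type*}
    [NormedAddCommGroup X] [NormedSpace ℝ X] [CompleteSpace X]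
    [NormedAddCommGroup Z] [NormedSpace ℝ Z]
    (hrefl : Function.Surjective (NormedSpace.inclusionInDoubleDual ℝ X))
    (C : Set X) (hCopen : IsOpen C) (hCconv : Convex ℝ C)
    (f : X → ℝ) (hfcont : ContinuousOn f C) (hfconv : ConvexOn ℝ C f)
    (I : Set ℝ) (hIopen : IsOpen I) (hIconv : Convex ℝ I) (hfI : f '' C ⊆ I)
    (G : ℝ → Z) (hG : IsDCOn I G) :
    IsDCOn C (G ∘ f) :=
  dc_comp_convex_reflexive_general hrefl C hCopen hCconv f hfcont hfconv I hIopen hfI G hG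
end

section
/- Let X, Y, Z be real normed linear spaces, A ⊆ X and B ⊆ Y convex sets, F : A → B a d.c. mapping with control function f : A → ℝ, and G : B → Z a d.c. mapping with control function g : B → ℝ. If G is Lipschitz on B with constant L_G and g is Lipschitz on B with constant L_g, then G ∘ F is d.c. on A with control function h = g ∘ F + (L_G + L_g) f. -/
open Set Metric Bornology Filter NNReal

/-! For `‖φ‖ ≤ 1`, the function `k = φ ∘ G + g` is convex and `(L_G + L_g)`-Lipschitz on `B`.
Testing against all functionals of norm at most one (Hahn–Banach), the control `f` bounds the
defect `‖F (a x₁ + b x₂) - (a F x₁ + b F x₂)‖` by the convexity defect of `f`; through the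
Lipschitz bound this absorbs the convexity defect of `k ∘ F` into that of `(L_G + L_g) f`. -/

theorem norm_le_of_forall_dual_le {Y : Type*} [NormedAddCommGroup Y] [NormedSpace ℝ Y]
    {v : Y} {D : ℝ} (h : ∀ φ : Y →L[ℝ] ℝ, ‖φ‖ ≤ 1 → φ v ≤ D) : ‖v‖ ≤ D := by
  rcases eq_or_ne v 0 with rfl | hv
  · simpa using h 0 (by simp)
  · obtain ⟨φ, hφ, hφv⟩ := exists_dual_vector ℝ v (norm_ne_zero_iff.mpr hv)
    simpa [hφv] using h φ hφ.le

namespace IsControlOn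

variable {X Y : Type*} [NormedAddCommGroup X] [NormedSpace ℝ X]
    [NormedAddCommGroup Y] [NormedSpace ℝ Y] {C : Set X} {F : X → Y} {f : X → ℝ}

theorem convex (hf : IsControlOn C F f) : Convex ℝ C :=
  (hf.2 0 (by simp)).1

theorem norm_map_combo_sub_le (hf : IsControlOn C F f) {x₁ x₂ : X} (hx₁ : x₁ ∈ C)
    (hx₂ : x₂ ∈ C) {a b : ℝ} (ha : 0 ≤ a) (hb : 0 ≤ b) (hab : a + b = 1) :
    ‖F (a • x₁ + b • x₂) - (a • F x₁ + b • F x₂)‖ ≤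
      a * f x₁ + b * f x₂ - f (a • x₁ + b • x₂) := by
  refine norm_le_of_forall_dual_le fun ψ hψ => ?_
  have hconv := (hf.2 ψ hψ).2 hx₁ hx₂ ha hb hab
  simp only [smul_eq_mul] at hconv
  simp only [map_sub, map_add, map_smul, smul_eq_mul]
  linarith

theorem convexOn_comp_add {B : Set Y} {k : Y → ℝ} {K : ℝ≥0} (hf : IsControlOn C F f)
    (hF : MapsTo F C B) (hk : ConvexOn ℝ B k) (hkLip : LipschitzOnWith K k B) :
    ConvexOn ℝ C (fun x => k (F x) + K * f x) := by
  refine ⟨hf.convex, fun x₁ hx₁ x₂ hx₂ a b ha hb hab => ?_⟩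
  set x := a • x₁ + b • x₂
  set y := a • F x₁ + b • F x₂
  have hy : y ∈ B := hk.1 (hF hx₁) (hF hx₂) ha hb hab
  have hk_seg : k y ≤ a * k (F x₁) + b * k (F x₂) := hk.2 (hF hx₁) (hF hx₂) ha hb hab
  have hk_near : k (F x) - k y ≤ K * ‖F x - y‖ := by
    have hFx : F x ∈ B := hF (hf.convex hx₁ hx₂ ha hb hab)
    simpa [dist_eq_norm] using (le_abs_self _).trans (hkLip.dist_le_mul _ hFx _ hy)
  have hF_seg : K * ‖F x - y‖ ≤ K * (a * f x₁ + b * f x₂ - f x) :=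
    mul_le_mul_of_nonneg_left (hf.norm_map_combo_sub_le hx₁ hx₂ ha hb hab) K.coe_nonneg
  simp only [smul_eq_mul]
  linarith

end IsControlOn

theorem dc_comp_lipschitz_control_general {X Y Z : Type*}
    [NormedAddCommGroup X] [NormedSpace ℝ X]
    [NormedAddCommGroup Y] [NormedSpace ℝ Y]
    [NormedAddCommGroup Z] [NormedSpace ℝ Z]
    (A : Set X) (B : Set Y)
    (F : X → Y) (hFmaps : Set.MapsTo F A B) (hFcont : ContinuousOn F A)
    (f : X → ℝ) (hf : IsControlOn A F f)
    (G : Y → Z)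
    (g : Y → ℝ) (hg : IsControlOn B G g)
    (LG Lg : NNReal) (hGLip : LipschitzOnWith LG G B) (hgLip : LipschitzOnWith Lg g B) :
    ContinuousOn (G ∘ F) A ∧
      IsControlOn A (G ∘ F) (fun x => g (F x) + ((LG : ℝ) + (Lg : ℝ)) * f x) := by
  refine ⟨hGLip.continuousOn.comp hFcont hFmaps,
    (hg.1.comp hFcont hFmaps).add (continuousOn_const.mul hf.1), fun φ hφ => ?_⟩
  have hφ_lip : LipschitzWith 1 φ := φ.lipschitzWith_of_opNorm_le (by simpa using hφ)
  have hφG_lip : LipschitzOnWith LG (φ ∘ G) B := by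
    simpa using hφ_lip.comp_lipschitzOnWith hGLip
  simpa only [NNReal.coe_add, Function.comp_apply, add_assoc] using
    hf.convexOn_comp_add hFmaps (hg.2 φ hφ) (hφG_lip.add hgLip)

/-- Composition of d.c. mappings, where the outer mapping and its control
function are Lipschitz, is d.c. with control function `g ∘ F + (L_G + L_g) f`. -/
theorem dc_comp_lipschitz_control {X Y Z : Type*}
    [NormedAddCommGroup X] [NormedSpace ℝ X]
    [NormedAddCommGroup Y] [NormedSpace ℝ Y]
    [NormedAddCommGroup Z] [NormedSpace ℝ Z]
    (A : Set X) (hAconv : Convex ℝ A) (B : Set Y) (hBconv : Convex ℝ B)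
    (F : X → Y) (hFmaps : Set.MapsTo F A B) (hFcont : ContinuousOn F A)
    (f : X → ℝ) (hf : IsControlOn A F f)
    (G : Y → Z) (hGcont : ContinuousOn G B)
    (g : Y → ℝ) (hg : IsControlOn B G g)
    (LG Lg : NNReal) (hGLip : LipschitzOnWith LG G B) (hgLip : LipschitzOnWith Lg g B) :
    ContinuousOn (G ∘ F) A ∧
      IsControlOn A (G ∘ F) (fun x => g (F x) + ((LG : ℝ) + (Lg : ℝ)) * f x) :=
  dc_comp_lipschitz_control_general A B F hFmaps hFcont f hf G g hg LG Lg hGLip hgLip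
end

section
/- Let X, Y be real normed linear spaces, C ⊆ X a bounded open convex set, and F : C → Y a d.c. mapping admitting a Lipschitz control function. Then F is Lipschitz on C. -/
open Set Metric Bornology Filter NNReal

/-! For a norming functional `φ` of `F x - F y`, the distance `‖F x - F y‖` is an increment of
`g_φ = φ ∘ F + f` minus an increment of `f`, so it suffices to bound the subgradients of the convex
functions `g_φ` uniformly. Subgradients `d` of `g_φ` and `e` of `g_{-φ}` at `x` add up to a
subgradient of the Lipschitz function `2f`, so `‖d + e‖ ≤ 2L`; testing `d` and `e` against points
of a small ball around a fixed point of `C`, where all `g_φ` are bounded above by continuity of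
`F`, then bounds `‖d‖` in terms of the radius of the ball and the size of `C`. -/

namespace ContinuousLinearMap

variable {X : Type*} [NormedAddCommGroup X] [NormedSpace ℝ X] {d : X →L[ℝ] ℝ}

theorem opNorm_le_of_apply_le_of_ball {ε K : ℝ} (hε : 0 < ε) (hK : 0 ≤ K)
    (h : ∀ v, ‖v‖ < ε → d v ≤ K * ‖v‖) : ‖d‖ ≤ K := by
  refine opNorm_le_of_ball hε hK fun v hv => ?_
  rw [mem_ball_zero_iff] at hv
  have hneg := h (-v) (by rwa [norm_neg])
  rw [map_neg, norm_neg] at hneg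
  exact abs_le.2 ⟨by linarith, h v hv⟩

theorem opNorm_le_of_apply_le_of_closedBall {r c : ℝ} (hr : 0 < r)
    (h : ∀ v, ‖v‖ ≤ r → d v ≤ c) : ‖d‖ ≤ c / r := by
  refine opNorm_bound_of_ball_bound hr c d fun v hv => ?_
  rw [mem_closedBall_zero_iff] at hv
  have hneg := h (-v) (by rwa [norm_neg])
  rw [map_neg] at hneg
  exact abs_le.2 ⟨by linarith, h v hv⟩

end ContinuousLinearMap

theorem ContinuousOn.isOpen_strictEpigraph {X : Type*} [TopologicalSpace X] {C : Set X}
    {g : X → ℝ} (hC : IsOpen C) (hg : ContinuousOn g C) :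
    IsOpen {p : X × ℝ | p.1 ∈ C ∧ g p.1 < p.2} := by
  have hcont : ContinuousOn (fun p : X × ℝ => g p.1 - p.2) (Prod.fst ⁻¹' C) :=
    (hg.comp continuous_fst.continuousOn fun _ hp => hp).sub continuous_snd.continuousOn
  convert hcont.isOpen_inter_preimage (hC.preimage continuous_fst) (isOpen_Iio (a := 0)) using 1
  ext p
  simp only [mem_inter_iff, mem_preimage, mem_Iio, sub_neg]
  rfl

section Subgradient

variable {X : Type*} [NormedAddCommGroup X] [NormedSpace ℝ X] {C : Set X} {g h : X → ℝ}
  {d e : X →L[ℝ] ℝ} {x : X}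

def HasSubgradientWithinAt (g : X → ℝ) (d : X →L[ℝ] ℝ) (C : Set X) (x : X) : Prop :=
  ∀ z ∈ C, g x + d (z - x) ≤ g z

/-- The strict epigraph is open and convex and misses `(x, g x)`; a functional separating them
has a negative vertical component and, rescaled, is the subgradient. -/
theorem ConvexOn.exists_hasSubgradientWithinAt (hC : IsOpen C) (hg : ConvexOn ℝ C g)
    (hgc : ContinuousOn g C) (hx : x ∈ C) : ∃ d, HasSubgradientWithinAt g d C x := by
  obtain ⟨Φ, hΦ⟩ := geometric_hahn_banach_open_point hg.convex_strict_epigraph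
    (hgc.isOpen_strictEpigraph hC) (x := (x, g x)) fun hmem => lt_irrefl _ hmem.2
  set ℓ := Φ.comp (ContinuousLinearMap.inl ℝ X ℝ)
  set α := Φ (0, 1)
  have hΦ_apply : ∀ w t, Φ (w, t) = ℓ w + t * α := fun w t => by
    rw [show ((w, t) : X × ℝ) = (w, 0) + t • (0, 1) by simp, map_add, map_smul, smul_eq_mul]
    rfl
  have hsep : ∀ z ∈ C, ∀ s > 0, ℓ z + (g z + s) * α < ℓ x + g x * α := fun z hz s hs => by
    simpa only [hΦ_apply] using hΦ (z, g z + s) ⟨hz, by linarith⟩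
  have hα : α < 0 := by nlinarith [hsep x hx 1 one_pos]
  refine ⟨(-α)⁻¹ • ℓ, fun z hz => ?_⟩
  have hle : ℓ z + g z * α ≤ ℓ x + g x * α := le_of_forall_pos_lt_add fun ε hε => by
    have hs : ε / -α * α = -ε := by
      have := hα.ne
      field_simp
    have := hsep z hz (ε / -α) (div_pos hε (neg_pos.2 hα))
    rw [add_mul, hs] at this
    linarith
  rw [smul_apply, map_sub, smul_eq_mul, ← le_sub_iff_add_le', inv_mul_le_iff₀ (neg_pos.2 hα)]
  nlinarith [hle]

theorem HasSubgradientWithinAt.add (hd : HasSubgradientWithinAt g d C x)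
    (he : HasSubgradientWithinAt h e C x) : HasSubgradientWithinAt (g + h) (d + e) C x :=
  fun z hz => by
    have := hd z hz
    have := he z hz
    simp only [Pi.add_apply, add_apply]
    linarith

theorem HasSubgradientWithinAt.le_add_norm_mul (hd : HasSubgradientWithinAt g d C x) {y : X}
    (hy : y ∈ C) : g x ≤ g y + ‖d‖ * dist x y := by
  have h1 := hd y hy
  have h2 := neg_le_of_abs_le ((d.le_opNorm (y - x)).trans_eq' (Real.norm_eq_abs _).symm)
  rw [← dist_eq_norm, dist_comm] at h2
  linarith

theorem HasSubgradientWithinAt.norm_le_of_lipschitzOnWith {K : ℝ≥0}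
    (hd : HasSubgradientWithinAt g d C x) (hC : IsOpen C) (hx : x ∈ C)
    (hg : LipschitzOnWith K g C) : ‖d‖ ≤ K := by
  obtain ⟨ε, hε, hball⟩ := Metric.isOpen_iff.1 hC x hx
  refine d.opNorm_le_of_apply_le_of_ball hε K.coe_nonneg fun v hv => ?_
  have hxv : x + v ∈ C := hball (by rwa [mem_ball, dist_eq_norm, add_sub_cancel_left])
  have h1 := hd _ hxv
  have h2 := hg.le_add_mul hxv hx
  rw [add_sub_cancel_left] at h1
  rw [dist_eq_norm, add_sub_cancel_left] at h2
  linarith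

theorem HasSubgradientWithinAt.norm_le_of_add_lipschitzOnWith {K : ℝ≥0} {a : X} {r M : ℝ}
    (hd : HasSubgradientWithinAt g d C x) (he : HasSubgradientWithinAt h e C x)
    (hC : IsOpen C) (hx : x ∈ C) (hgh : LipschitzOnWith K (g + h) C)
    (hr : 0 < r) (hball : closedBall a r ⊆ C)
    (hgM : ∀ w ∈ closedBall a r, g w ≤ M) (hhM : ∀ w ∈ closedBall a r, h w ≤ M) :
    ‖d‖ ≤ (2 * M - (g x + h x) + K * ‖x - a‖) / r := by
  have hde : ‖d + e‖ ≤ K := (hd.add he).norm_le_of_lipschitzOnWith hC hx hgh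
  have hde_apply : -(K * ‖x - a‖) ≤ d (a - x) + e (a - x) := by
    have := neg_le_of_abs_le (((d + e).le_opNorm (a - x)).trans_eq' (Real.norm_eq_abs _).symm)
    rw [norm_sub_rev] at this
    nlinarith [norm_nonneg (x - a), add_apply d e (a - x)]
  refine d.opNorm_le_of_apply_le_of_closedBall hr fun v hv => ?_
  have ha : a ∈ closedBall a r := mem_closedBall_self hr.le
  have hav : a + v ∈ closedBall a r := by
    rwa [mem_closedBall, dist_eq_norm, add_sub_cancel_left]
  have h1 := hd _ (hball hav)
  rw [show a + v - x = v + (a - x) by abel, map_add] at h1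
  linarith [he _ (hball ha), hgM _ hav, hhM _ ha]

theorem lipschitzOnWith_of_forall_hasSubgradientWithinAt {K : ℝ}
    (h : ∀ x ∈ C, ∃ d, HasSubgradientWithinAt g d C x ∧ ‖d‖ ≤ K) :
    LipschitzOnWith K.toNNReal g C :=
  LipschitzOnWith.of_le_add_mul' K fun x hx y hy => by
    obtain ⟨d, hd, hdK⟩ := h x hx
    exact (hd.le_add_norm_mul hy).trans (by gcongr)

end Subgradient

section DualFamily

variable {X Y : Type*} [PseudoMetricSpace X] [NormedAddCommGroup Y] [NormedSpace ℝ Y]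
  {C : Set X} {F : X → Y} {f : X → ℝ}

theorem exists_closedBall_subset_forall_dual_add_le (hC : IsOpen C) (hF : ContinuousOn F C)
    (hf : ContinuousOn f C) {a : X} (ha : a ∈ C) :
    ∃ r > 0, ∃ M, closedBall a r ⊆ C ∧
      ∀ φ : Y →L[ℝ] ℝ, ‖φ‖ ≤ 1 → ∀ w ∈ closedBall a r, φ (F w) + f w ≤ M := by
  have hcont : ContinuousAt (fun w => ‖F w‖ + f w) a :=
    ((hF.norm.add hf) a ha).continuousAt (hC.mem_nhds ha)
  obtain ⟨r, hr, hr_sub⟩ := nhds_basis_closedBall.eventually_iff.1 <|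
    (hC.eventually_mem ha).and (hcont.eventually_lt continuousAt_const (lt_add_one _))
  refine ⟨r, hr, ‖F a‖ + f a + 1, fun w hw => (hr_sub hw).1, fun φ hφ w hw => ?_⟩
  have hφw : φ (F w) ≤ ‖F w‖ :=
    (le_abs_self _).trans ((φ.le_opNorm (F w)).trans (mul_le_of_le_one_left (norm_nonneg _) hφ))
  linarith [(hr_sub hw).2]

theorem lipschitzOnWith_of_forall_dual_add {K L : ℝ≥0}
    (hG : ∀ φ : Y →L[ℝ] ℝ, ‖φ‖ ≤ 1 → LipschitzOnWith K (fun x => φ (F x) + f x) C)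
    (hf : LipschitzOnWith L f C) : LipschitzOnWith (K + L) F C := by
  refine LipschitzOnWith.of_dist_le_mul fun x hx y hy => ?_
  obtain ⟨φ, hφ, hφxy⟩ := exists_dual_vector'' ℝ (F x - F y)
  have h1 := (hG φ hφ).le_add_mul hx hy
  have h2 := hf.le_add_mul hy hx
  have hnorm : ‖F x - F y‖ = φ (F x) - φ (F y) := by simpa using hφxy.symm
  rw [dist_eq_norm (F x), hnorm, NNReal.coe_add, add_mul]
  rw [dist_comm y x] at h2
  linarith

theorem LipschitzOnWith.dual_add_add_neg_dual_add {L : ℝ≥0} (hf : LipschitzOnWith L f C)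
    (φ : Y →L[ℝ] ℝ) :
    LipschitzOnWith (L + L) ((fun x => φ (F x) + f x) + fun x => (-φ) (F x) + f x) C := by
  have hsum : ((fun x => φ (F x) + f x) + fun x => (-φ) (F x) + f x) = f + f := by
    ext x
    simp only [Pi.add_apply, neg_apply]
    ring
  rw [hsum]
  exact hf.add hf

end DualFamily

section Control

variable {X Y : Type*} [NormedAddCommGroup X] [NormedSpace ℝ X]
  [NormedAddCommGroup Y] [NormedSpace ℝ Y] {C : Set X} {F : X → Y} {f : X → ℝ}

theorem IsControlOn.exists_hasSubgradientWithinAt (hf : IsControlOn C F f) (hC : IsOpen C)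
    (hF : ContinuousOn F C) {φ : Y →L[ℝ] ℝ} (hφ : ‖φ‖ ≤ 1) {x : X} (hx : x ∈ C) :
    ∃ d, HasSubgradientWithinAt (fun x => φ (F x) + f x) d C x :=
  (hf.2 φ hφ).exists_hasSubgradientWithinAt hC ((φ.continuous.comp_continuousOn hF).add hf.1) hx

theorem IsControlOn.lipschitzOnWith_dual_add (hf : IsControlOn C F f) (hC : IsOpen C)
    (hF : ContinuousOn F C) {L : ℝ≥0} (hfL : LipschitzOnWith L f C) {a : X} {r M R : ℝ}
    (ha : a ∈ C) (hr : 0 < r) (hball : closedBall a r ⊆ C)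
    (hM : ∀ φ : Y →L[ℝ] ℝ, ‖φ‖ ≤ 1 → ∀ w ∈ closedBall a r, φ (F w) + f w ≤ M)
    (hR : C ⊆ closedBall a R) {φ : Y →L[ℝ] ℝ} (hφ : ‖φ‖ ≤ 1) :
    LipschitzOnWith ((2 * M - 2 * f a + 4 * L * R) / r).toNNReal (fun x => φ (F x) + f x) C := by
  have hφ' : ‖-φ‖ ≤ 1 := by rwa [norm_neg]
  refine lipschitzOnWith_of_forall_hasSubgradientWithinAt fun x hx => ?_
  obtain ⟨d, hd⟩ := hf.exists_hasSubgradientWithinAt hC hF hφ hx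
  obtain ⟨e, he⟩ := hf.exists_hasSubgradientWithinAt hC hF hφ' hx
  refine ⟨d, hd, (hd.norm_le_of_add_lipschitzOnWith he hC hx (hfL.dual_add_add_neg_dual_add φ)
    hr hball (hM φ hφ) (hM (-φ) hφ')).trans ?_⟩
  have hxa : ‖x - a‖ ≤ R := by simpa [dist_eq_norm] using hR hx
  have hfx := hfL.le_add_mul ha hx
  rw [dist_eq_norm, norm_sub_rev] at hfx
  simp only [neg_apply, NNReal.coe_add]
  refine div_le_div_of_nonneg_right ?_ hr.le
  nlinarith [mul_le_mul_of_nonneg_left hxa L.coe_nonneg]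

end Control

theorem dc_lipschitz_of_lipschitz_control_general {X Y : Type*}
    [NormedAddCommGroup X] [NormedSpace ℝ X]
    [NormedAddCommGroup Y] [NormedSpace ℝ Y]
    (C : Set X) (hCbdd : IsBounded C) (hCopen : IsOpen C)
    (F : X → Y) (hFcont : ContinuousOn F C)
    (f : X → ℝ) (hf : IsControlOn C F f)
    (L : NNReal) (hfLip : LipschitzOnWith L f C) :
    ∃ K : NNReal, LipschitzOnWith K F C := by
  rcases C.eq_empty_or_nonempty with rfl | ⟨a, ha⟩
  · exact ⟨0, lipschitzOnWith_empty _ _⟩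
  obtain ⟨r, hr, M, hball, hM⟩ :=
    exists_closedBall_subset_forall_dual_add_le hCopen hFcont hf.1 ha
  obtain ⟨R, hR⟩ := hCbdd.subset_closedBall a
  exact ⟨_, lipschitzOnWith_of_forall_dual_add
    (fun φ hφ => hf.lipschitzOnWith_dual_add hCopen hFcont hfLip ha hr hball hM hR hφ) hfLip⟩

/-- A d.c. mapping on a bounded open convex set admitting a Lipschitz
control function is Lipschitz. -/
theorem dc_lipschitz_of_lipschitz_control {X Y : Type*}
    [NormedAddCommGroup X] [NormedSpace ℝ X]
    [NormedAddCommGroup Y] [NormedSpace ℝ Y]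
    (C : Set X) (hCbdd : IsBounded C) (hCopen : IsOpen C) (hCconv : Convex ℝ C)
    (F : X → Y) (hFcont : ContinuousOn F C)
    (f : X → ℝ) (hf : IsControlOn C F f)
    (L : NNReal) (hfLip : LipschitzOnWith L f C) :
    ∃ K : NNReal, LipschitzOnWith K F C :=
  dc_lipschitz_of_lipschitz_control_general C hCbdd hCopen F hFcont f hf L hfLip
end

section
/- Let X, Y be real normed linear spaces, A ⊆ X an open convex set, and F : A → Y a mapping that is C^{1,1} on A. If X admits an equivalent norm |·| with modulus of convexity of power type 2, then F is d.c. on A with a control function of the form f(x) = c·|x|² for some constant c > 0. -/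
open Set Metric Bornology Filter NNReal

/-! A norm `N` whose modulus of convexity is of power type 2 makes `N²` uniformly convex:
`N ((x + y) / 2) ^ 2 + K * N (x - y) ^ 2 ≤ (N x ^ 2 + N y ^ 2) / 2` for some `K > 0`.
A `C^{1,1}` map has second differences `F x + F y - 2 F ((x + y) / 2)` of norm at most
`L / 2 * ‖x - y‖ ^ 2`. For `c` large the gain `c * K * N (x - y) ^ 2` absorbs the second difference
of `φ ∘ F` for every `φ` in the unit ball of `Y*`, so `φ ∘ F + c * N ^ 2` is midpoint convex,
hence convex since it is continuous. -/

theorem nonpos_on_Icc_of_midpoint_le {u : ℝ → ℝ} (hu : ContinuousOn u (Icc 0 1))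
    (h0 : u 0 ≤ 0) (h1 : u 1 ≤ 0)
    (hmid : ∀ s ∈ Icc (0 : ℝ) 1, ∀ t ∈ Icc (0 : ℝ) 1, u (midpoint ℝ s t) ≤ (u s + u t) / 2) :
    ∀ θ ∈ Icc (0 : ℝ) 1, u θ ≤ 0 := by
  obtain ⟨θ₀, ⟨hθ₀0, hθ₀1⟩, hmax⟩ :=
    isCompact_Icc.exists_isMaxOn (nonempty_Icc.2 zero_le_one) hu
  suffices u θ₀ ≤ 0 from fun θ hθ => (hmax hθ).trans this
  -- `θ₀` is the midpoint of an endpoint of `[0, 1]` and a point where `u` is at most `u θ₀`.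
  rcases le_total θ₀ (1 / 2) with h | h
  · have hmem : 2 * θ₀ ∈ Icc (0 : ℝ) 1 := ⟨by linarith, by linarith⟩
    have := hmid 0 (left_mem_Icc.2 zero_le_one) _ hmem
    rw [show midpoint ℝ 0 (2 * θ₀) = θ₀ by simp [midpoint_eq_smul_add]] at this
    linarith [show u (2 * θ₀) ≤ u θ₀ from hmax hmem]
  · have hmem : 2 * θ₀ - 1 ∈ Icc (0 : ℝ) 1 := ⟨by linarith, by linarith⟩
    have := hmid _ hmem 1 (right_mem_Icc.2 zero_le_one)
    rw [show midpoint ℝ (2 * θ₀ - 1) 1 = θ₀ by simp [midpoint_eq_smul_add]] at this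
    linarith [show u (2 * θ₀ - 1) ≤ u θ₀ from hmax hmem]

theorem convexOn_of_midpoint_le {X : Type*} [AddCommGroup X] [Module ℝ X] [TopologicalSpace X]
    [IsTopologicalAddGroup X] [ContinuousSMul ℝ X] {C : Set X} {f : X → ℝ}
    (hC : Convex ℝ C) (hf : ContinuousOn f C)
    (hmid : ∀ x ∈ C, ∀ y ∈ C, f (midpoint ℝ x y) ≤ (f x + f y) / 2) : ConvexOn ℝ C f := by
  refine ⟨hC, fun x hx y hy α β hα hβ hαβ => ?_⟩
  let γ : ℝ →ᵃ[ℝ] X := AffineMap.lineMap x y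
  have hγC : ∀ θ ∈ Icc (0 : ℝ) 1, γ θ ∈ C := fun θ hθ => hC.lineMap_mem hx hy hθ
  have key := nonpos_on_Icc_of_midpoint_le (u := fun θ => f (γ θ) - AffineMap.lineMap (f x) (f y) θ)
    ((hf.comp AffineMap.lineMap_continuous.continuousOn hγC).sub (by fun_prop))
    (by simp [γ]) (by simp [γ])
    (fun s hs t ht => by
      have := hmid _ (hγC s hs) _ (hγC t ht)
      simp only [AffineMap.map_midpoint]
      simp only [midpoint_eq_smul_add, invOf_eq_inv, smul_eq_mul] at this ⊢
      linarith)
    β ⟨hβ, by linarith⟩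
  obtain rfl : α = 1 - β := by linarith
  simpa [γ, AffineMap.lineMap_apply_module, sub_nonpos] using key

section LipschitzDerivative

variable {X Y : Type*} [NormedAddCommGroup X] [NormedSpace ℝ X] [NormedAddCommGroup Y]
  [NormedSpace ℝ Y] {A : Set X} {F : X → Y} {F' : X → X →L[ℝ] Y} {L : ℝ≥0}

theorem norm_image_sub_sub_fderiv_le_of_lipschitzOnWith (hA : Convex ℝ A)
    (hF : ∀ x ∈ A, HasFDerivAt F (F' x) x) (hF' : LipschitzOnWith L F' A)
    {x z : X} (hx : x ∈ A) (hz : z ∈ A) :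
    ‖F z - F x - F' x (z - x)‖ ≤ L * ‖z - x‖ ^ 2 := by
  have hseg : segment ℝ x z ⊆ A := hA.segment_subset hx hz
  have bound : ∀ w ∈ segment ℝ x z, ‖F' w - F' x‖ ≤ L * ‖z - x‖ := fun w hw =>
    calc ‖F' w - F' x‖ ≤ L * ‖w - x‖ := hF'.norm_sub_le (hseg hw) hx
      _ ≤ L * ‖z - x‖ := by gcongr; exact norm_sub_le_of_mem_segment hw
  calc ‖F z - F x - F' x (z - x)‖ ≤ L * ‖z - x‖ * ‖z - x‖ :=
        (convex_segment x z).norm_image_sub_le_of_norm_hasFDerivWithin_le'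
          (fun w hw => (hF w (hseg hw)).hasFDerivWithinAt) bound
          (left_mem_segment ℝ x z) (right_mem_segment ℝ x z)
    _ = L * ‖z - x‖ ^ 2 := by ring

theorem norm_add_sub_two_smul_midpoint_le_of_lipschitzOnWith (hA : Convex ℝ A)
    (hF : ∀ x ∈ A, HasFDerivAt F (F' x) x) (hF' : LipschitzOnWith L F' A)
    {x y : X} (hx : x ∈ A) (hy : y ∈ A) :
    ‖F x + F y - (2 : ℝ) • F (midpoint ℝ x y)‖ ≤ L / 2 * ‖x - y‖ ^ 2 := by
  set m := midpoint ℝ x y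
  have hm : m ∈ A := hA.midpoint_mem hx hy
  have hxm : ‖x - m‖ = ‖x - y‖ / 2 := by
    simp [m, left_sub_midpoint, norm_smul, div_eq_inv_mul]
  have hym : ‖y - m‖ = ‖x - y‖ / 2 := by
    simp [m, right_sub_midpoint, norm_smul, norm_sub_rev, div_eq_inv_mul]
  -- The first-order terms cancel since `m` is the midpoint.
  have hsplit : F x + F y - (2 : ℝ) • F m
      = (F x - F m - F' m (x - m)) + (F y - F m - F' m (y - m)) := by
    have : F' m (x - m) + F' m (y - m) = 0 := by
      rw [← map_add, show x - m + (y - m) = 0 by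
        simp only [m, midpoint_eq_smul_add, invOf_eq_inv]; module, map_zero]
    linear_combination (norm := module) this
  calc ‖F x + F y - (2 : ℝ) • F m‖
      ≤ ‖F x - F m - F' m (x - m)‖ + ‖F y - F m - F' m (y - m)‖ := hsplit ▸ norm_add_le _ _
    _ ≤ L * ‖x - m‖ ^ 2 + L * ‖y - m‖ ^ 2 :=
      add_le_add (norm_image_sub_sub_fderiv_le_of_lipschitzOnWith hA hF hF' hm hx)
        (norm_image_sub_sub_fderiv_le_of_lipschitzOnWith hA hF hF' hm hy)
    _ = L / 2 * ‖x - y‖ ^ 2 := by rw [hxm, hym]; ring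

end LipschitzDerivative

namespace Seminorm

variable {X : Type*} [AddCommGroup X] [Module ℝ X]

def HasPowTwoModulus (p : Seminorm ℝ X) (a : ℝ) : Prop :=
  ∀ u v, p u ≤ 1 → p v ≤ 1 → a * p (u - v) ^ 2 ≤ 1 - p (midpoint ℝ u v)

variable {p : Seminorm ℝ X} {a : ℝ}

theorem map_midpoint_le (p : Seminorm ℝ X) (x y : X) :
    p (midpoint ℝ x y) ≤ (p x + p y) / 2 := by
  rw [midpoint_eq_smul_add, map_smul_eq_mul, invOf_eq_inv, norm_inv, Real.norm_two]
  linarith [map_add_le_add p x y]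

theorem map_smul_of_nonneg (p : Seminorm ℝ X) {c : ℝ} (hc : 0 ≤ c) (x : X) :
    p (c • x) = c * p x := by
  rw [map_smul_eq_mul, Real.norm_of_nonneg hc]

theorem HasPowTwoModulus.map_midpoint_le_of_map_eq_one (hp : p.HasPowTwoModulus a)
    (ha : 0 ≤ a) {x y : X} (hx : p x = 1) (hy : p y ≤ 1) (hy₀ : 0 < p y) :
    p (midpoint ℝ x y) ≤ (1 + p y) / 2 - a * p y * (p (x - y) - (1 - p y)) ^ 2 := by
  set s := p y with hs
  -- The modulus is applied to `x` and the unit vector `y'` in the direction of `y`.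
  set y' := s⁻¹ • y
  have hy' : p y' = 1 := by rw [map_smul_of_nonneg p (by positivity), ← hs]; field_simp
  have hy'y : p (y' - y) = 1 - s := by
    rw [show y' - y = (s⁻¹ - 1) • y by module,
      map_smul_of_nonneg p (sub_nonneg.2 (one_le_inv₀ hy₀ |>.2 hy)), ← hs]
    field_simp
  have hdist₀ : 0 ≤ p (x - y) - (1 - s) := by linarith [le_map_add_map_sub p x y]
  have hdist : p (x - y) - (1 - s) ≤ p (x - y') := by
    linarith [show p (x - y) ≤ p (x - y') + p (y' - y) by
      simpa using map_add_le_add p (x - y') (y' - y)]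
  have hmod : a * (p (x - y) - (1 - s)) ^ 2 ≤ 1 - p (midpoint ℝ x y') :=
    (by gcongr : a * (p (x - y) - (1 - s)) ^ 2 ≤ a * p (x - y') ^ 2).trans (hp x y' hx.le hy'.le)
  have hdecomp : midpoint ℝ x y = s • midpoint ℝ x y' + ((1 - s) / 2) • x := by
    simp only [y', midpoint_eq_smul_add, invOf_eq_inv]
    match_scalars
    · ring
    · field_simp
  calc p (midpoint ℝ x y) ≤ s * p (midpoint ℝ x y') + (1 - s) / 2 := by
        rw [hdecomp]
        refine (map_add_le_add p _ _).trans_eq ?_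
        rw [map_smul_of_nonneg p hy₀.le, map_smul_of_nonneg p (by linarith), hx, mul_one]
    _ ≤ s * (1 - a * (p (x - y) - (1 - s)) ^ 2) + (1 - s) / 2 := by gcongr; linarith
    _ = (1 + s) / 2 - a * s * (p (x - y) - (1 - s)) ^ 2 := by ring

theorem HasPowTwoModulus.map_midpoint_sq_add_le_of_map_eq_one (hp : p.HasPowTwoModulus a)
    (ha : 0 ≤ a) (ha' : a ≤ 1 / 4) {x y : X} (hx : p x = 1) (hy : p y ≤ 1) :
    p (midpoint ℝ x y) ^ 2 + a / 64 * p (x - y) ^ 2 ≤ (1 + p y ^ 2) / 2 := by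
  set s := p y
  set d := p (x - y)
  have hd_lower : 1 - s ≤ d := by linarith [le_map_add_map_sub p x y]
  have hd_upper : d ≤ 1 + s := by linarith [map_sub_le_add p x y]
  have hm₀ : 0 ≤ p (midpoint ℝ x y) := apply_nonneg p _
  have hm : p (midpoint ℝ x y) ≤ (1 + s) / 2 := by simpa [hx] using map_midpoint_le p x y
  rcases le_or_gt d (4 * (1 - s)) with hsmall | hlarge
  · -- `(1 + s) ^ 2 / 4 = (1 + s ^ 2) / 2 - (1 - s) ^ 2 / 4` already leaves enough room.
    nlinarith
  · have hs : 1 / 2 < s := by linarith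
    have hU := hp.map_midpoint_le_of_map_eq_one ha hx hy (by linarith)
    have hg : 9 * a / 32 * d ^ 2 ≤ a * s * (d - (1 - s)) ^ 2 :=
      calc 9 * a / 32 * d ^ 2 = a * (1 / 2) * (3 / 4 * d) ^ 2 := by ring
        _ ≤ a * s * (d - (1 - s)) ^ 2 := by gcongr; linarith
    set g := a * s * (d - (1 - s)) ^ 2
    have : p (midpoint ℝ x y) ^ 2 ≤ ((1 + s) / 2 - g) ^ 2 := by gcongr
    nlinarith

theorem HasPowTwoModulus.map_midpoint_sq_add_le (hp : p.HasPowTwoModulus a) (ha : 0 ≤ a)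
    (ha' : a ≤ 1 / 4) (x y : X) :
    p (midpoint ℝ x y) ^ 2 + a / 64 * p (x - y) ^ 2 ≤ (p x ^ 2 + p y ^ 2) / 2 := by
  wlog hxy : p y ≤ p x generalizing x y
  · simpa only [midpoint_comm, map_sub_rev p y, add_comm (p y ^ 2)] using this y x (by linarith)
  rcases (apply_nonneg p x).eq_or_lt with hx₀ | hx₀
  · have hy₀ : p y = 0 := le_antisymm (hx₀ ▸ hxy) (apply_nonneg p y)
    have hm : p (midpoint ℝ x y) ≤ 0 := by simpa [← hx₀, hy₀] using map_midpoint_le p x y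
    have hd : p (x - y) ≤ 0 := by simpa [← hx₀, hy₀] using map_sub_le_add p x y
    nlinarith [apply_nonneg p (midpoint ℝ x y), apply_nonneg p (x - y)]
  -- Both sides are homogeneous of degree two: normalize so that `p x = 1`.
  set r := p x with hr
  have key := hp.map_midpoint_sq_add_le_of_map_eq_one ha ha' (x := r⁻¹ • x) (y := r⁻¹ • y)
    (by rw [map_smul_of_nonneg p (by positivity), ← hr]; field_simp)
    (by rw [map_smul_of_nonneg p (by positivity)]; field_simp; exact hxy)
  have hmid : midpoint ℝ (r⁻¹ • x) (r⁻¹ • y) = r⁻¹ • midpoint ℝ x y := by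
    simp only [midpoint_eq_smul_add, smul_add, smul_comm r⁻¹]
  rw [hmid, ← smul_sub, map_smul_of_nonneg p (by positivity), map_smul_of_nonneg p (by positivity),
    map_smul_of_nonneg p (by positivity)] at key
  field_simp at key
  linarith

end Seminorm

namespace IsEquivNormPT2

variable {X : Type*} [NormedAddCommGroup X] [NormedSpace ℝ X] {N : X → ℝ}

def toSeminorm (hN : IsEquivNormPT2 N) : Seminorm ℝ X :=
  Seminorm.of N hN.1 fun b u => by rw [hN.2.1, Real.norm_eq_abs]

theorem continuous (hN : IsEquivNormPT2 N) : Continuous N := by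
  obtain ⟨_, c₂, _, hc₂, hbound⟩ := hN.2.2.1
  refine (LipschitzWith.of_dist_le_mul (K := ⟨c₂, hc₂.le⟩) fun x y => ?_).continuous
  rw [Real.dist_eq, dist_eq_norm]
  exact (abs_sub_map_le_sub hN.toSeminorm x y).trans (hbound _).2

theorem exists_hasPowTwoModulus (hN : IsEquivNormPT2 N) :
    ∃ a, 0 < a ∧ a ≤ 1 / 4 ∧ hN.toSeminorm.HasPowTwoModulus a := by
  obtain ⟨a, ha, hmod⟩ := hN.2.2.2
  refine ⟨min a (1 / 4), by positivity, min_le_right _ _, fun u v hu hv => ?_⟩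
  set p := hN.toSeminorm
  rcases (apply_nonneg p (u - v)).eq_or_lt with h₀ | h₀
  · rw [← h₀]
    linarith [p.map_midpoint_le u v]
  have h₂ : p (u - v) ≤ 2 := by linarith [map_sub_le_add p u v]
  calc min a (1 / 4) * p (u - v) ^ 2 ≤ a * p (u - v) ^ 2 := by gcongr; exact min_le_left _ _
    _ ≤ 1 - p (midpoint ℝ u v) := by
      rw [midpoint_eq_smul_add, invOf_eq_inv]
      exact hmod _ ⟨h₀, h₂⟩ u v hu hv le_rfl

end IsEquivNormPT2

theorem convexOn_comp_add_mul_sq_of_hasPowTwoModulus {X Y : Type*} [NormedAddCommGroup X]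
    [NormedSpace ℝ X] [NormedAddCommGroup Y] [NormedSpace ℝ Y] {A : Set X} {F : X → Y}
    {F' : X → X →L[ℝ] Y} {L : ℝ≥0} {p : Seminorm ℝ X} {a c c₁ : ℝ}
    (hA : Convex ℝ A) (hF : ∀ x ∈ A, HasFDerivAt F (F' x) x) (hF' : LipschitzOnWith L F' A)
    (hp : p.HasPowTwoModulus a) (ha : 0 ≤ a) (ha' : a ≤ 1 / 4) (hpc : Continuous p)
    (hc₁ : 0 ≤ c₁) (hpc₁ : ∀ u, c₁ * ‖u‖ ≤ p u) (hc : 0 ≤ c) (hcL : 16 * L ≤ a * c * c₁ ^ 2)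
    {φ : Y →L[ℝ] ℝ} (hφ : ‖φ‖ ≤ 1) :
    ConvexOn ℝ A (fun x => φ (F x) + c * p x ^ 2) := by
  have hFc : ContinuousOn F A := fun x hx => (hF x hx).continuousAt.continuousWithinAt
  refine convexOn_of_midpoint_le hA ((φ.continuous.comp_continuousOn hFc).add
    (continuous_const.mul (hpc.pow 2)).continuousOn) fun x hx y hy => ?_
  have hφF : ‖φ (F x + F y - (2 : ℝ) • F (midpoint ℝ x y))‖ ≤ L / 2 * ‖x - y‖ ^ 2 :=
    calc ‖φ (F x + F y - (2 : ℝ) • F (midpoint ℝ x y))‖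
        ≤ ‖φ‖ * ‖F x + F y - (2 : ℝ) • F (midpoint ℝ x y)‖ := φ.le_opNorm _
      _ ≤ 1 * (L / 2 * ‖x - y‖ ^ 2) := by
        gcongr
        exact norm_add_sub_two_smul_midpoint_le_of_lipschitzOnWith hA hF hF' hx hy
      _ = L / 2 * ‖x - y‖ ^ 2 := one_mul _
  have hsecond := (abs_le.1 (by simpa using hφF)).1
  have hlow : c₁ ^ 2 * ‖x - y‖ ^ 2 ≤ p (x - y) ^ 2 := by
    rw [← mul_pow]
    gcongr
    exact hpc₁ _
  have hsq := mul_le_mul_of_nonneg_left (hp.map_midpoint_sq_add_le ha ha' x y) hc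
  have hgain := mul_le_mul_of_nonneg_left hlow (mul_nonneg ha hc)
  have hL := mul_le_mul_of_nonneg_right hcL (sq_nonneg ‖x - y‖)
  linarith

theorem dc_of_C11_uniformly_convex_general {X Y : Type*}
    [NormedAddCommGroup X] [NormedSpace ℝ X]
    [NormedAddCommGroup Y] [NormedSpace ℝ Y]
    (A : Set X) (hAconv : Convex ℝ A)
    (F : X → Y) (hF : IsC11On A F)
    (N : X → ℝ) (hN : IsEquivNormPT2 N) :
    ∃ c : ℝ, 0 < c ∧ ContinuousOn F A ∧ IsControlOn A F (fun x => c * (N x) ^ 2) := by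
  obtain ⟨F', hF', L, hLip⟩ := hF
  obtain ⟨c₁, _, hc₁, _, hbound⟩ := hN.2.2.1
  obtain ⟨a, ha, ha', hmod⟩ := hN.exists_hasPowTwoModulus
  refine ⟨16 * (L + 1) / (a * c₁ ^ 2), by positivity,
    fun x hx => (hF' x hx).continuousAt.continuousWithinAt,
    (continuous_const.mul (hN.continuous.pow 2)).continuousOn,
    fun φ hφ => convexOn_comp_add_mul_sq_of_hasPowTwoModulus hAconv hF' hLip hmod ha.le ha'
      hN.continuous hc₁.le (fun u => (hbound u).1) (by positivity) ?_ hφ⟩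
  field_simp
  linarith

/-- A `C^{1,1}` mapping on an open convex subset of a space with an
equivalent norm `N` of modulus of convexity of power type 2 is d.c. with a control
function of the form `x ↦ c * (N x)^2`. -/
theorem dc_of_C11_uniformly_convex {X Y : Type*}
    [NormedAddCommGroup X] [NormedSpace ℝ X]
    [NormedAddCommGroup Y] [NormedSpace ℝ Y]
    (A : Set X) (hAopen : IsOpen A) (hAconv : Convex ℝ A)
    (F : X → Y) (hF : IsC11On A F)
    (N : X → ℝ) (hN : IsEquivNormPT2 N) :
    ∃ c : ℝ, 0 < c ∧ ContinuousOn F A ∧ IsControlOn A F (fun x => c * (N x) ^ 2) :=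
  dc_of_C11_uniformly_convex_general A hAconv F hF N hN
end

section
/- Let X, Y be real normed linear spaces, C ⊆ X a nonempty convex set, and F : C → Y a mapping. Let D_n (n ∈ ℕ) be nonempty convex subsets of C such that D_n ⊆ D_{n+1} for each n, the union of the D_n equals C, and for each n: dist(D_n, C \ D_{n+1}) > 0, D_n is relatively open in C, and the restriction of F to D_n is d.c. with a control function γ_n : D_n → ℝ that is either bounded or Lipschitz. Then F is d.c. on C. -/
open Set Metric Bornology Filter NNReal

/-!
Every control is first put in a normal form: a nonnegative control `γ` lying between a globally
Lipschitz convex function `β` and `β + R` (a bounded control is shifted up; a Lipschitz one is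
replaced by its McShane extension, which is convex, plus a cone). Adding convex corrections built
from the `β`'s and from distances to `D (n - 2)` turns these into controls `hₙ` on `Dₙ` such that
`hₙ ≤ hₙ₊₁` on `Dₙ \ Dₙ₋₁` while `hₙ₊₁ ≤ hₙ` on bounded parts of earlier sets once `n` is large.

The maximum of two controls is a control, and gluing a control `u` on `Dₙ` to a control `v` on
`Dₙ₊₁` by `max u v` on `Dₙ` and `v` outside preserves convexity as soon as `u ≤ v` near the relative
boundary of `Dₙ`: on a segment, the part inside `Dₙ` where `u` is the larger one is enclosed by two
points where `u` lies below the chord. Gluing the `hₙ` one after another gives functions that are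
locally eventually constant, and their limit is a control for `F` on `C`.
-/

open Topology
open AffineMap (lineMap)

section McShane

variable {α : Type*} [PseudoMetricSpace α] {s : Set α} {f : α → ℝ} {K : ℝ≥0}

noncomputable def mcShaneExtension (s : Set α) (f : α → ℝ) (K : ℝ≥0) (x : α) : ℝ :=
  ⨅ y : s, f y + K * dist x y

theorem LipschitzOnWith.sub_mul_dist_le (hf : LipschitzOnWith K f s) {y z : α} (hy : y ∈ s)
    (hz : z ∈ s) (x : α) : f z - K * dist x z ≤ f y + K * dist x y := by
  have h₁ := hf.le_add_mul hz hy
  have h₂ := mul_le_mul_of_nonneg_left (dist_triangle_left z y x) K.coe_nonneg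
  linarith

theorem mcShaneExtension_le (hf : LipschitzOnWith K f s) {y : α} (hy : y ∈ s) (x : α) :
    mcShaneExtension s f K x ≤ f y + K * dist x y :=
  ciInf_le ⟨_, forall_mem_range.2 fun z : s => hf.sub_mul_dist_le z.2 hy x⟩ ⟨y, hy⟩

theorem le_mcShaneExtension (hs : s.Nonempty) {c : ℝ} {x : α}
    (h : ∀ y ∈ s, c ≤ f y + K * dist x y) : c ≤ mcShaneExtension s f K x :=
  have := hs.to_subtype
  le_ciInf fun y => h y y.2

theorem eqOn_mcShaneExtension (hf : LipschitzOnWith K f s) : EqOn (mcShaneExtension s f K) f s :=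
  fun x hx => le_antisymm (by simpa using mcShaneExtension_le hf hx x)
    (le_mcShaneExtension ⟨x, hx⟩ fun _ hy => hf.le_add_mul hx hy)

theorem sub_le_mcShaneExtension (hf : LipschitzOnWith K f s) {z : α} (hz : z ∈ s) (x : α) :
    f z - K * dist x z ≤ mcShaneExtension s f K x :=
  le_mcShaneExtension ⟨z, hz⟩ fun _ hy => hf.sub_mul_dist_le hy hz x

theorem lipschitzWith_mcShaneExtension (hs : s.Nonempty) (hf : LipschitzOnWith K f s) :
    LipschitzWith K (mcShaneExtension s f K) :=
  LipschitzWith.of_le_add_mul K fun x x' => by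
    rw [← sub_le_iff_le_add]
    refine le_mcShaneExtension hs fun y hy => ?_
    rw [sub_le_iff_le_add]
    calc mcShaneExtension s f K x ≤ f y + K * dist x y := mcShaneExtension_le hf hy x
      _ ≤ f y + K * dist x' y + K * dist x x' := by
        rw [add_assoc, ← mul_add, add_comm (dist x' y)]
        gcongr
        apply dist_triangle

theorem convexOn_mcShaneExtension {E : Type*} [NormedAddCommGroup E] [NormedSpace ℝ E]
    {s : Set E} {f : E → ℝ} (hs : s.Nonempty) (hsc : Convex ℝ s) (hf : ConvexOn ℝ s f)
    (hfK : LipschitzOnWith K f s) : ConvexOn ℝ univ (mcShaneExtension s f K) := by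
  refine ⟨convex_univ, fun x _ x' _ a b ha hb hab => ?_⟩
  have := hs.to_subtype
  simp only [smul_eq_mul]
  conv_rhs => simp only [mcShaneExtension, Real.mul_iInf_of_nonneg ha, Real.mul_iInf_of_nonneg hb]
  refine le_ciInf_add_ciInf fun y y' => ?_
  have hdist : dist (a • x + b • x') (a • (y : E) + b • (y' : E)) ≤ a * dist x y + b * dist x' y' :=
    calc _ ≤ dist (a • x) (a • (y : E)) + dist (b • x') (b • (y' : E)) := dist_add_add_le _ _ _ _
      _ = a * dist x y + b * dist x' y' := by
        rw [dist_smul₀, dist_smul₀, Real.norm_of_nonneg ha, Real.norm_of_nonneg hb]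
  calc mcShaneExtension s f K (a • x + b • x')
      ≤ f (a • y + b • y') + K * dist (a • x + b • x') (a • (y : E) + b • (y' : E)) :=
        mcShaneExtension_le hfK (hsc y.2 y'.2 ha hb hab) _
    _ ≤ (a * f y + b * f y') + K * (a * dist x y + b * dist x' y') := by
        gcongr
        exact hf.2 y.2 y'.2 ha hb hab
    _ = a * (f y + K * dist x y) + b * (f y' + K * dist x' y') := by ring

end McShane

theorem convexOn_finset_sum {ι E : Type*} [AddCommGroup E] [Module ℝ E] {s : Set E}
    (hs : Convex ℝ s) (t : Finset ι) {f : ι → E → ℝ} (hf : ∀ i ∈ t, ConvexOn ℝ s (f i)) :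
    ConvexOn ℝ s fun x => ∑ i ∈ t, f i x := by
  classical
  induction t using Finset.induction_on with
  | empty => simpa using convexOn_const 0 hs
  | insert i t hi ih =>
    have hi' := hf i (t.mem_insert_self i)
    have ht := ih fun j hj => hf j (Finset.mem_insert_of_mem hj)
    exact (hi'.add ht).congr fun x _ => by simp [Finset.sum_insert hi]

section Control

variable {X Y : Type*} [NormedAddCommGroup X] [NormedSpace ℝ X] [NormedAddCommGroup Y]
  [NormedSpace ℝ Y] {D : Set X} {F : X → Y} {γ g : X → ℝ}

theorem IsControlOn.convexOn_s9 (hγ : IsControlOn D F γ) : ConvexOn ℝ D γ := by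
  simpa using hγ.2 0 (by simp)

theorem IsControlOn.add (hγ : IsControlOn D F γ) (hg : ConvexOn ℝ D g) (hgc : ContinuousOn g D) :
    IsControlOn D F fun x => γ x + g x :=
  ⟨hγ.1.add hgc, fun φ hφ => ((hγ.2 φ hφ).add hg).congr fun x _ => by simp [add_assoc]⟩

theorem IsControlOn.congr (hγ : IsControlOn D F γ) (h : EqOn γ g D) : IsControlOn D F g :=
  ⟨hγ.1.congr h.symm, fun φ hφ => (hγ.2 φ hφ).congr fun x hx => by simp only [h hx]⟩

structure IsSplitControlOn (D : Set X) (F : X → Y) (γ β : X → ℝ) (K : ℝ≥0) (R : ℝ) : Prop where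
  isControlOn : IsControlOn D F γ
  lipschitzWith : LipschitzWith K β
  convexOn_s9 : ConvexOn ℝ univ β
  nonneg : ∀ x ∈ D, 0 ≤ γ x
  le : ∀ x ∈ D, β x ≤ γ x
  le_add : ∀ x ∈ D, γ x ≤ β x + R

theorem IsControlOn.isSplitControlOn_of_abs_le {M : ℝ} (hγ : IsControlOn D F γ)
    (hM : ∀ x ∈ D, |γ x| ≤ M) : IsSplitControlOn D F (fun x => γ x + M) 0 0 (2 * M) where
  isControlOn := hγ.add (convexOn_const M hγ.convexOn_s9.1) continuousOn_const
  lipschitzWith := LipschitzWith.const 0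
  convexOn_s9 := convexOn_const 0 convex_univ
  nonneg x hx := by linarith [neg_abs_le (γ x), hM x hx]
  le x hx := by simp only [Pi.zero_apply]; linarith [neg_abs_le (γ x), hM x hx]
  le_add x hx := by simp only [Pi.zero_apply]; linarith [le_abs_self (γ x), hM x hx]

theorem IsControlOn.isSplitControlOn_of_lipschitzOnWith {L : ℝ≥0} {x₀ : X}
    (hγ : IsControlOn D F γ) (hL : LipschitzOnWith L γ D) (hx₀ : x₀ ∈ D) :
    IsSplitControlOn D F (fun x => mcShaneExtension D γ L x + (L * dist x x₀ - γ x₀))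
      (fun x => mcShaneExtension D γ L x + (L * dist x x₀ - γ x₀)) (L + L) 0 := by
  have hcone : LipschitzWith L fun x => (L : ℝ) * dist x x₀ - γ x₀ :=
    LipschitzWith.of_le_add_mul L fun x y => by
      linarith [mul_le_mul_of_nonneg_left (dist_triangle x y x₀) L.coe_nonneg]
  have hcone_conv : ConvexOn ℝ univ fun x => (L : ℝ) * dist x x₀ - γ x₀ :=
    (((convexOn_dist x₀ convex_univ).smul L.coe_nonneg).add_const (-γ x₀)).congr fun x _ => by
      simp [sub_eq_add_neg]
  refine ⟨(hγ.add (hcone_conv.subset (subset_univ D) hγ.convexOn_s9.1)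
      hcone.continuous.continuousOn).congr fun x hx => by simp only [eqOn_mcShaneExtension hL hx],
    (lipschitzWith_mcShaneExtension ⟨x₀, hx₀⟩ hL).add hcone,
    (convexOn_mcShaneExtension ⟨x₀, hx₀⟩ hγ.convexOn_s9.1 hγ.convexOn_s9 hL).add hcone_conv,
    fun x _ => by linarith [sub_le_mcShaneExtension hL hx₀ x], fun _ _ => le_rfl,
    fun _ _ => by rw [add_zero]⟩

end Control

theorem exists_dist_lt_of_mem_of_notMem {α : Type*} [PseudoMetricSpace α] {P : ℝ → α}
    (hP : Continuous P) {U : Set α} (hU : IsOpen U) {a b : ℝ} (hab : a ≤ b) (ha : P a ∈ U)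
    (hb : P b ∉ U) {ε : ℝ} (hε : 0 < ε) :
    ∃ t ∈ Icc a b, P t ∈ U ∧ ∃ t' ∈ Icc a b, P t' ∉ U ∧ dist (P t) (P t') < ε := by
  set S := Icc a b ∩ P ⁻¹' Uᶜ
  have hSa : a ∈ lowerBounds S := fun t ht => ht.1.1
  have ht₀ : sInf S ∈ S :=
    (isClosed_Icc.inter (hU.isClosed_compl.preimage hP)).csInf_mem ⟨b, ⟨hab, le_rfl⟩, hb⟩ ⟨a, hSa⟩
  have hat₀ : a < sInf S := ht₀.1.1.lt_of_ne fun h => ht₀.2 (h ▸ ha)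
  obtain ⟨t, ht, hdist⟩ := (Filter.Eventually.and (Ioo_mem_nhdsLT hat₀) (nhdsWithin_le_nhds
    (hP.continuousAt.eventually_mem (ball_mem_nhds _ hε)))).exists
  have htab : t ∈ Icc a b := ⟨ht.1.le, ht.2.le.trans ht₀.1.2⟩
  refine ⟨t, htab, ?_, sInf S, ht₀.1, ht₀.2, hdist⟩
  by_contra htU
  exact (csInf_le ⟨a, hSa⟩ ⟨htab, htU⟩).not_gt ht.2

theorem continuousOn_piecewise_max {α : Type*} [PseudoMetricSpace α] {B B' U : Set α}
    [DecidablePred (· ∈ B)] {u v : α → ℝ} {ε : ℝ} (hU : IsOpen U) (hB : B = U ∩ B')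
    (hε : 0 < ε) (hu : ContinuousOn u B) (hv : ContinuousOn v B')
    (hcollar : ∀ p ∈ B, ∀ q ∈ B' \ B, dist p q < ε → u p ≤ v p) :
    ContinuousOn (B.piecewise (fun x => max (u x) (v x)) v) B' := by
  intro x hx
  by_cases hxB : x ∈ B
  · have hBx : B ∈ 𝓝[B'] x := by
      rw [hB]
      exact inter_mem (mem_nhdsWithin_of_mem_nhds (hU.mem_nhds (hB ▸ hxB).1)) self_mem_nhdsWithin
    refine ((hu x hxB).sup ((hv x hx).mono (hB ▸ inter_subset_right))).mono_of_mem_nhdsWithin hBx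
      |>.congr_of_eventuallyEq ?_ (piecewise_eq_of_mem _ _ _ hxB)
    filter_upwards [hBx] with y hy using piecewise_eq_of_mem _ _ _ hy
  · refine (hv x hx).congr_of_eventuallyEq ?_ (piecewise_eq_of_notMem _ _ _ hxB)
    filter_upwards [mem_nhdsWithin_of_mem_nhds (ball_mem_nhds x hε)] with y hyx
    by_cases hy : y ∈ B
    · rw [piecewise_eq_of_mem _ _ _ hy]
      exact max_eq_right (hcollar y hy x ⟨hx, hxB⟩ hyx)
    · exact piecewise_eq_of_notMem _ _ _ hy

section Gluing

variable {X : Type*} [NormedAddCommGroup X] [NormedSpace ℝ X]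

theorem ConvexOn.apply_lineMap_le {s : Set X} {v w : X → ℝ} (hv : ConvexOn ℝ s v)
    (hvw : ∀ p ∈ s, v p ≤ w p) {x y : X} (hx : x ∈ s) (hy : y ∈ s) {t : ℝ}
    (ht : t ∈ Icc (0 : ℝ) 1) :
    v (lineMap x y t) ≤ (1 - t) * w x + t * w y := by
  have h1t : 0 ≤ 1 - t := sub_nonneg.2 ht.2
  calc v (lineMap x y t) ≤ (1 - t) * v x + t * v y := by
        simpa [AffineMap.lineMap_apply_module] using hv.2 hx hy h1t ht.1 (by ring)
    _ ≤ (1 - t) * w x + t * w y :=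
        add_le_add (mul_le_mul_of_nonneg_left (hvw x hx) h1t)
          (mul_le_mul_of_nonneg_left (hvw y hy) ht.1)

variable {B B' U : Set X} {u v : X → ℝ} {ε : ℝ}

theorem exists_lineMap_mem_le (hU : IsOpen U) (hB : B = U ∩ B') (hB' : Convex ℝ B') (hε : 0 < ε)
    {w : X → ℝ} (hv : ConvexOn ℝ B' v) (hvw : ∀ p ∈ B', v p ≤ w p) (huw : ∀ p ∈ B, u p ≤ w p)
    (hcollar : ∀ p ∈ B, ∀ q ∈ B' \ B, dist p q < ε → u p ≤ v p) {x y : X} (hx : x ∈ B')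
    (hy : y ∈ B') {θ : ℝ} (hθ : θ ∈ Icc (0 : ℝ) 1) (hθB : lineMap x y θ ∈ B) :
    ∃ θ' ∈ Icc θ 1, lineMap x y θ' ∈ B ∧ u (lineMap x y θ') ≤ (1 - θ') * w x + θ' * w y := by
  subst hB
  by_cases hyB : y ∈ U ∩ B'
  · exact ⟨1, ⟨hθ.2, le_rfl⟩, by simpa using hyB, by simpa using huw y hyB⟩
  have hyU : lineMap x y (1 : ℝ) ∉ U := by simpa using fun h => hyB ⟨h, hy⟩
  obtain ⟨t, ht, htU, t', ht', ht'U, hdist⟩ :=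
    exists_dist_lt_of_mem_of_notMem AffineMap.lineMap_continuous hU hθ.2 hθB.1 hyU hε
  have ht01 : t ∈ Icc (0 : ℝ) 1 := ⟨hθ.1.trans ht.1, ht.2⟩
  have htB : lineMap x y t ∈ U ∩ B' := ⟨htU, hB'.lineMap_mem hx hy ht01⟩
  have ht'B : lineMap x y t' ∈ B' \ (U ∩ B') :=
    ⟨hB'.lineMap_mem hx hy ⟨hθ.1.trans ht'.1, ht'.2⟩, fun h => ht'U h.1⟩
  exact ⟨t, ht, htB, (hcollar _ htB _ ht'B hdist).trans (hv.apply_lineMap_le hvw hx hy ht01)⟩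

theorem convexOn_piecewise_max [DecidablePred (· ∈ B)] (hU : IsOpen U) (hB : B = U ∩ B')
    (hB' : Convex ℝ B') (hε : 0 < ε) (hu : ConvexOn ℝ B u) (hv : ConvexOn ℝ B' v)
    (hcollar : ∀ p ∈ B, ∀ q ∈ B' \ B, dist p q < ε → u p ≤ v p) :
    ConvexOn ℝ B' (B.piecewise (fun x => max (u x) (v x)) v) := by
  set w := B.piecewise (fun x => max (u x) (v x)) v
  have hvw : ∀ p ∈ B', v p ≤ w p := fun p _ => by by_cases hp : p ∈ B <;> simp [w, hp]
  have huw : ∀ p ∈ B, u p ≤ w p := fun p hp => by simp [w, hp]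
  refine ⟨hB', fun x hx y hy a b ha hb hab => ?_⟩
  obtain rfl : a = 1 - b := by linarith
  have hb1 : b ∈ Icc (0 : ℝ) 1 := ⟨hb, by linarith⟩
  rw [← AffineMap.lineMap_apply_module, smul_eq_mul, smul_eq_mul]
  have hvz := hv.apply_lineMap_le hvw hx hy hb1
  by_cases hz : lineMap x y b ∈ B
  swap
  · simpa [w, hz] using hvz
  rw [show w (lineMap x y b) = _ from piecewise_eq_of_mem _ _ _ hz]
  refine max_le ?_ hvz
  obtain ⟨θ₂, hθ₂, hθ₂B, hθ₂u⟩ := exists_lineMap_mem_le hU hB hB' hε hv hvw huw hcollar hx hy hb1 hz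
  obtain ⟨θ₁, hθ₁, hθ₁B, hθ₁u⟩ := exists_lineMap_mem_le hU hB hB' hε hv hvw huw hcollar hy hx
    (show 1 - b ∈ Icc (0 : ℝ) 1 from ⟨ha, by linarith⟩)
    (by rwa [AffineMap.lineMap_apply_one_sub])
  rw [← AffineMap.lineMap_apply_one_sub] at hθ₁B hθ₁u
  -- `u - chord` is convex along the line and nonpositive at `1 - θ₁ ≤ b ≤ θ₂`
  have hchord : ConcaveOn ℝ univ fun t : ℝ => (1 - t) * w x + t * w y :=
    ⟨convex_univ, fun s _ r _ c d _ _ hcd => le_of_eq (by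
      simp only [smul_eq_mul]; linear_combination (w x) * hcd)⟩
  have hg := (hu.comp_affineMap (lineMap x y)).sub (hchord.subset (subset_univ _)
    (hu.comp_affineMap (lineMap x y)).1)
  have := hg.le_max_of_mem_Icc hθ₁B hθ₂B ⟨by linarith [hθ₁.1], hθ₂.1⟩
  simp only [Pi.sub_apply, Function.comp_apply, sub_sub_cancel] at this
  linarith [this.trans (max_le (sub_nonpos.2 (by linarith)) (sub_nonpos.2 hθ₂u))]

theorem IsControlOn.piecewise_max {Y : Type*} [NormedAddCommGroup Y] [NormedSpace ℝ Y]
    {F : X → Y} [DecidablePred (· ∈ B)] (hU : IsOpen U) (hB : B = U ∩ B') (hε : 0 < ε)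
    (hu : IsControlOn B F u) (hv : IsControlOn B' F v)
    (hcollar : ∀ p ∈ B, ∀ q ∈ B' \ B, dist p q < ε → u p ≤ v p) :
    IsControlOn B' F (B.piecewise (fun x => max (u x) (v x)) v) := by
  refine ⟨continuousOn_piecewise_max hU hB hε hu.1 hv.1 hcollar, fun φ hφ => ?_⟩
  refine (convexOn_piecewise_max hU hB hv.convexOn_s9.1 hε (hu.2 φ hφ) (hv.2 φ hφ)
    fun p hp q hq hpq => (add_le_add_iff_left _).2 (hcollar p hp q hq hpq)).congr fun x _ => ?_
  by_cases hx : x ∈ B <;> simp [hx, max_add_add_left]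

end Gluing

section GlueSeq

variable {α : Type*} (D : ℕ → Set α) (h : ℕ → α → ℝ)

open Classical in
noncomputable def glueSeq : ℕ → α → ℝ
  | 0 => h 0
  | n + 1 => (D n).piecewise (fun x => max (glueSeq n x) (h (n + 1) x)) (h (n + 1))

open Classical in
theorem glueSeq_succ (n : ℕ) :
    glueSeq D h (n + 1) =
      (D n).piecewise (fun x => max (glueSeq D h n x) (h (n + 1) x)) (h (n + 1)) :=
  rfl

theorem le_glueSeq : ∀ n x, h n x ≤ glueSeq D h n x
  | 0, _ => le_rfl
  | n + 1, x => by by_cases hx : x ∈ D n <;> simp [glueSeq_succ, hx]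

variable {D h}

theorem glueSeq_eq_of_forall_notMem {n : ℕ} {x : α} (hx : ∀ k < n, x ∉ D k) :
    glueSeq D h n x = h n x := by
  cases n with
  | zero => rfl
  | succ n => simp [glueSeq_succ, hx n n.lt_succ_self]

theorem glueSeq_succ_eq_of_le {n : ℕ} {x : α} (hx : x ∈ D n) (hle : h (n + 1) x ≤ h n x) :
    glueSeq D h (n + 1) x = glueSeq D h n x := by
  classical
  rw [glueSeq_succ, piecewise_eq_of_mem _ _ _ hx]
  exact max_eq_left (hle.trans (le_glueSeq D h n x))

end GlueSeq

theorem exists_eventually_eqOn_of_eventually_eqOn_succ {α β : Type*} [TopologicalSpace α]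
    {C : Set α} {g : ℕ → α → β}
    (hg : ∀ x ∈ C, ∃ V ∈ 𝓝[C] x, ∀ᶠ n in atTop, EqOn (g (n + 1)) (g n) V) :
    ∃ f : α → β, ∀ x ∈ C, ∃ V ∈ 𝓝[C] x, ∀ᶠ n in atTop, EqOn (g n) f V := by
  have hconst : ∀ x ∈ C, ∃ V ∈ 𝓝[C] x, ∃ N, ∀ n ≥ N, EqOn (g n) (g N) V := by
    intro x hx
    obtain ⟨V, hV, hev⟩ := hg x hx
    obtain ⟨N, hN⟩ := eventually_atTop.1 hev
    refine ⟨V, hV, N, fun n hn => ?_⟩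
    induction n, hn using Nat.le_induction with
    | base => exact fun _ _ => rfl
    | succ n hn ih => exact fun y hy => (hN n hn hy).trans (ih hy)
  choose! V hV N hN using hconst
  refine ⟨fun y => g (N y) y, fun x hx => ⟨V x ∩ C, inter_mem (hV x hx) self_mem_nhdsWithin,
    eventually_atTop.2 ⟨N x, fun n hn y hy => ?_⟩⟩⟩
  have hyy : y ∈ V y := mem_of_mem_nhdsWithin hy.2 (hV y hy.2)
  calc g n y = g (N x) y := hN x hx n hn hy.1
    _ = g (max (N x) (N y)) y := (hN x hx _ (le_max_left _ _) hy.1).symm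
    _ = g (N y) y := hN y hy.2 _ (le_max_right _ _) hyy

section Exhaustion

variable {X Y : Type*} [NormedAddCommGroup X] [NormedSpace ℝ X] [NormedAddCommGroup Y]
  [NormedSpace ℝ Y]

structure IsSeparatedExhaustion (C : Set X) (D : ℕ → Set X) : Prop where
  convex : ∀ n, Convex ℝ (D n)
  nonempty : ∀ n, (D n).Nonempty
  mono : Monotone D
  iUnion_eq : ⋃ n, D n = C
  relOpen : ∀ n, ∃ U, IsOpen U ∧ D n = U ∩ C
  sep : ∀ n, ∃ ε > (0 : ℝ), ∀ a ∈ D n, ∀ b ∈ C \ D (n + 1), ε ≤ ‖a - b‖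

namespace IsSeparatedExhaustion

variable {C : Set X} {D : ℕ → Set X} {F : X → Y}

theorem subset (hD : IsSeparatedExhaustion C D) (n : ℕ) : D n ⊆ C :=
  hD.iUnion_eq ▸ subset_iUnion D n

theorem eventually_mem (hD : IsSeparatedExhaustion C D) {x : X} (hx : x ∈ C) :
    ∀ᶠ n in atTop, x ∈ D n := by
  rw [← hD.iUnion_eq, mem_iUnion] at hx
  obtain ⟨m, hm⟩ := hx
  exact eventually_atTop.2 ⟨m, fun n hn => hD.mono hn hm⟩

theorem mem_nhdsWithin_of_mem (hD : IsSeparatedExhaustion C D) {n : ℕ} {x : X} (hx : x ∈ D n) :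
    D n ∈ 𝓝[C] x := by
  obtain ⟨U, hU, hDU⟩ := hD.relOpen n
  rw [hDU] at hx ⊢
  exact mem_nhdsWithin.2 ⟨U, hU, hx.1, subset_rfl⟩

theorem exists_isOpen_eq_inter_succ (hD : IsSeparatedExhaustion C D) (n : ℕ) :
    ∃ U, IsOpen U ∧ D n = U ∩ D (n + 1) := by
  obtain ⟨U, hU, hDU⟩ := hD.relOpen n
  refine ⟨U, hU, Subset.antisymm (fun x hx => ⟨(hDU ▸ hx).1, hD.mono n.le_succ hx⟩) ?_⟩
  exact fun x hx => hDU ▸ ⟨hx.1, hD.subset _ hx.2⟩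

theorem exists_forall_notMem_of_dist_lt (hD : IsSeparatedExhaustion C D) (n : ℕ) :
    ∃ ε > 0, ∀ p ∈ D n, ∀ q ∈ C \ D n, dist p q < ε → ∀ k < n, p ∉ D k := by
  cases n with
  | zero => exact ⟨1, one_pos, fun _ _ _ _ _ k hk => absurd hk k.not_lt_zero⟩
  | succ n =>
    obtain ⟨ε, hε, hsep⟩ := hD.sep n
    refine ⟨ε, hε, fun p _ q hq hpq k hk hpk => ?_⟩
    have := hsep p (hD.mono (Nat.le_of_lt_succ hk) hpk) q hq
    rw [← dist_eq_norm] at this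
    linarith

theorem exists_cutoffs (hD : IsSeparatedExhaustion C D) :
    ∃ e : ℕ → X → ℝ, (∀ n, Continuous (e n)) ∧ (∀ n, ConvexOn ℝ univ (e n)) ∧
      (∀ n m, m + 2 ≤ n → ∀ x ∈ D m, e n x = 0) ∧
      ∀ n, ∀ x ∈ D n, (∀ k < n, x ∉ D k) → 1 ≤ e n x := by
  have key : ∀ n, ∃ e : X → ℝ, Continuous e ∧ ConvexOn ℝ univ e ∧
      (∀ m, m + 2 ≤ n → ∀ x ∈ D m, e x = 0) ∧ ∀ x ∈ D n, (∀ k < n, x ∉ D k) → 1 ≤ e x := by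
    intro n
    match n with
    | 0 | 1 => exact ⟨fun _ => 1, continuous_const, convexOn_const 1 convex_univ,
        fun m hm => by omega, fun _ _ _ => le_rfl⟩
    | n + 2 =>
      obtain ⟨ε, hε, hsep⟩ := hD.sep n
      have h0 : LipschitzOnWith 1 (fun _ : X => (0 : ℝ)) (D n) :=
        (LipschitzWith.const 0).lipschitzOnWith.weaken zero_le_one
      refine ⟨fun x => ε⁻¹ * mcShaneExtension (D n) (fun _ => 0) 1 x,
        continuous_const.mul (lipschitzWith_mcShaneExtension (hD.nonempty n) h0).continuous,
        (convexOn_mcShaneExtension (hD.nonempty n) (hD.convex n)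
          (convexOn_const 0 (hD.convex n)) h0).smul (inv_nonneg.2 hε.le),
        fun m hm x hx => by simp [eqOn_mcShaneExtension h0 (hD.mono (by omega) hx)],
        fun x hx hnew => ?_⟩
      rw [le_inv_mul_iff₀ hε, mul_one]
      refine le_mcShaneExtension (hD.nonempty n) fun y hy => ?_
      have := hsep y hy x ⟨hD.subset _ hx, hnew (n + 1) (by omega)⟩
      rw [← dist_eq_norm, dist_comm] at this
      simpa using this
  choose e he using key
  exact ⟨e, fun n => (he n).1, fun n => (he n).2.1, fun n => (he n).2.2.1, fun n => (he n).2.2.2⟩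

theorem exists_collared_controls (hD : IsSeparatedExhaustion C D) {γ β : ℕ → X → ℝ}
    {K : ℕ → ℝ≥0} {R : ℕ → ℝ} (hγ : ∀ n, IsSplitControlOn (D n) F (γ n) (β n) (K n) (R n)) :
    ∃ h : ℕ → X → ℝ, (∀ n, IsControlOn (D n) F (h n)) ∧
      (∀ n, ∀ x ∈ D n, (∀ k < n, x ∉ D k) → h n x ≤ h (n + 1) x) ∧
      ∀ m (r : ℝ), ∀ᶠ n in atTop, ∀ x ∈ D m, ‖x‖ ≤ r → h (n + 1) x ≤ h n x := by
  obtain ⟨e, he_cont, he_conv, he_zero, he_one⟩ := hD.exists_cutoffs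
  -- `Δ n` bounds `γ (n + 1)` on `D (n + 1) ∩ closedBall 0 n`
  set Δ : ℕ → ℝ := fun n => |β (n + 1) 0| + K (n + 1) * n + R (n + 1)
  set c : ℕ → ℝ := fun n => max 0 (Δ n + R n)
  set t : ℕ → X → ℝ := fun k x => β k x + c k * e k x - Δ k
  have ht_conv : ∀ k, ConvexOn ℝ univ (t k) := fun k =>
    (((hγ k).convexOn_s9.add ((he_conv k).smul (le_max_left 0 (Δ k + R k)))).add_const
      (-Δ k)).congr fun x _ => by simp [t, c, sub_eq_add_neg]
  have ht_cont : ∀ k, Continuous (t k) := fun k =>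
    ((hγ k).lipschitzWith.continuous.add (continuous_const.mul (he_cont k))).sub continuous_const
  refine ⟨fun n x => γ n x + ∑ k ∈ Finset.range n, t k x, fun n => ?_, ?_, ?_⟩
  · exact (hγ n).isControlOn.add ((convexOn_finset_sum convex_univ _ fun k _ => ht_conv k).subset
      (subset_univ _) (hD.convex n)) (continuous_finsetSum _ fun k _ => ht_cont k).continuousOn
  · intro n x hx hnew
    have h₁ := (hγ (n + 1)).nonneg x (hD.mono n.le_succ hx)
    have h₂ := (hγ n).le_add x hx
    have h₃ : Δ n + R n ≤ c n * e n x :=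
      (le_max_right _ _).trans (le_mul_of_one_le_right (le_max_left _ _) (he_one n x hx hnew))
    simp only [Finset.sum_range_succ, t]
    linarith
  · intro m r
    filter_upwards [eventually_ge_atTop (m + 2), eventually_ge_atTop ⌈r⌉₊] with n hmn hrn x hx hxr
    have hxn : ‖x‖ ≤ n := hxr.trans (Nat.ceil_le.1 hrn)
    have h₁ := (hγ (n + 1)).le_add x (hD.mono (by omega) hx)
    have h₂ := (hγ (n + 1)).lipschitzWith.dist_le_mul x 0
    rw [Real.dist_eq, dist_zero_right] at h₂
    have h₃ := (hγ n).le x (hD.mono (by omega) hx)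
    have h₄ := mul_le_mul_of_nonneg_left hxn (K (n + 1)).coe_nonneg
    simp only [Finset.sum_range_succ, t, Δ, he_zero n m hmn x hx, mul_zero]
    linarith [le_abs_self (β (n + 1) x - β (n + 1) 0), le_abs_self (β (n + 1) 0)]

theorem isControlOn_glueSeq (hD : IsSeparatedExhaustion C D) {h : ℕ → X → ℝ}
    (hh : ∀ n, IsControlOn (D n) F (h n))
    (hcollar : ∀ n, ∀ x ∈ D n, (∀ k < n, x ∉ D k) → h n x ≤ h (n + 1) x) :
    ∀ n, IsControlOn (D n) F (glueSeq D h n)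
  | 0 => hh 0
  | n + 1 => by
    classical
    obtain ⟨U, hU, hDU⟩ := hD.exists_isOpen_eq_inter_succ n
    obtain ⟨ε, hε, hnew⟩ := hD.exists_forall_notMem_of_dist_lt n
    rw [glueSeq_succ]
    refine (isControlOn_glueSeq hD hh hcollar n).piecewise_max hU hDU hε (hh (n + 1))
      fun p hp q hq hpq => ?_
    have hp_new := hnew p hp q ⟨hD.subset _ hq.1, hq.2⟩ hpq
    rw [glueSeq_eq_of_forall_notMem hp_new]
    exact hcollar n p hp hp_new

theorem glueSeq_eventually_eqOn (hD : IsSeparatedExhaustion C D) {h : ℕ → X → ℝ}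
    (hstab : ∀ m (r : ℝ), ∀ᶠ n in atTop, ∀ x ∈ D m, ‖x‖ ≤ r → h (n + 1) x ≤ h n x) {x : X}
    (hx : x ∈ C) : ∃ V ∈ 𝓝[C] x, ∀ᶠ n in atTop, EqOn (glueSeq D h (n + 1)) (glueSeq D h n) V := by
  obtain ⟨m, hm⟩ := (hD.eventually_mem hx).exists
  refine ⟨D m ∩ ball 0 (‖x‖ + 1), inter_mem (hD.mem_nhdsWithin_of_mem hm)
    (mem_nhdsWithin_of_mem_nhds (isOpen_ball.mem_nhds (by simp))), ?_⟩
  filter_upwards [hstab m (‖x‖ + 1), eventually_ge_atTop m] with n hn hmn y hy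
  exact glueSeq_succ_eq_of_le (hD.mono hmn hy.1) (hn y hy.1 (mem_ball_zero_iff.1 hy.2).le)

theorem isControlOn_of_eventually_eqOn (hD : IsSeparatedExhaustion C D) (hC : Convex ℝ C)
    {g : ℕ → X → ℝ} (hg : ∀ n, IsControlOn (D n) F (g n)) {f : X → ℝ}
    (hf : ∀ x ∈ C, ∃ V ∈ 𝓝[C] x, ∀ᶠ n in atTop, EqOn (g n) f V) : IsControlOn C F f := by
  have hpt : ∀ x ∈ C, ∀ᶠ n in atTop, x ∈ D n ∧ g n x = f x := fun x hx => by
    obtain ⟨V, hV, hev⟩ := hf x hx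
    exact (hD.eventually_mem hx).and (hev.mono fun n hn => hn (mem_of_mem_nhdsWithin hx hV))
  refine ⟨fun x hx => ?_, fun φ hφ => ⟨hC, fun x hx y hy a b ha hb hab => ?_⟩⟩
  · obtain ⟨V, hV, hev⟩ := hf x hx
    obtain ⟨n, hxn, hn⟩ := ((hD.eventually_mem hx).and hev).exists
    exact ((hg n).1 x hxn).mono_of_mem_nhdsWithin (hD.mem_nhdsWithin_of_mem hxn)
      |>.congr_of_eventuallyEq (eventually_of_mem hV fun y hy => (hn hy).symm)
        (hn (mem_of_mem_nhdsWithin hx hV)).symm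
  · obtain ⟨n, ⟨hxn, hfx⟩, ⟨hyn, hfy⟩, -, hfz⟩ :=
      ((hpt x hx).and ((hpt y hy).and (hpt _ (hC hx hy ha hb hab)))).exists
    simpa only [hfx, hfy, hfz] using ((hg n).2 φ hφ).2 hxn hyn ha hb hab

end IsSeparatedExhaustion

end Exhaustion

theorem dc_of_exhaustion_general {X Y : Type*}
    [NormedAddCommGroup X] [NormedSpace ℝ X]
    [NormedAddCommGroup Y] [NormedSpace ℝ Y]
    (C : Set X) (hCconv : Convex ℝ C)
    (F : X → Y) (D : ℕ → Set X)
    (hDne : ∀ n, (D n).Nonempty) (hDconv : ∀ n, Convex ℝ (D n))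
    (hDmono : ∀ n, D n ⊆ D (n + 1))
    (hDunion : (⋃ n, D n) = C)
    (hdist : ∀ n, ∃ ε > (0:ℝ), ∀ a ∈ D n, ∀ b ∈ C \ D (n + 1), ε ≤ ‖a - b‖)
    (hDrelopen : ∀ n, ∃ U : Set X, IsOpen U ∧ D n = U ∩ C)
    (hFdc : ∀ n, ContinuousOn F (D n) ∧ ∃ γ : X → ℝ, IsControlOn (D n) F γ ∧
      ((∃ M : ℝ, ∀ x ∈ D n, |γ x| ≤ M) ∨ (∃ L : NNReal, LipschitzOnWith L γ (D n)))) :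
    IsDCOn C F := by
  have hD : IsSeparatedExhaustion C D :=
    ⟨hDconv, hDne, monotone_nat_of_le_succ hDmono, hDunion, hDrelopen, hdist⟩
  have hsplit : ∀ n, ∃ γ β K R, IsSplitControlOn (D n) F γ β K R := fun n => by
    obtain ⟨-, γ, hγ, ⟨M, hM⟩ | ⟨L, hL⟩⟩ := hFdc n
    · exact ⟨_, _, _, _, hγ.isSplitControlOn_of_abs_le hM⟩
    · exact ⟨_, _, _, _, hγ.isSplitControlOn_of_lipschitzOnWith hL (hDne n).some_mem⟩
  choose γ β K R hγ using hsplit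
  obtain ⟨h, hh, hcollar, hstab⟩ := hD.exists_collared_controls hγ
  obtain ⟨f, hf⟩ := exists_eventually_eqOn_of_eventually_eqOn_succ fun x hx =>
    hD.glueSeq_eventually_eqOn hstab hx
  refine ⟨fun x hx => ?_, f,
    hD.isControlOn_of_eventually_eqOn hCconv (hD.isControlOn_glueSeq hh hcollar) hf⟩
  obtain ⟨n, hn⟩ := (hD.eventually_mem hx).exists
  exact ((hFdc n).1 x hn).mono_of_mem_nhdsWithin (hD.mem_nhdsWithin_of_mem hn)

/-- Hartman-type gluing lemma: if `F` is d.c. on an increasing sequence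
of relatively open convex subsets exhausting `C`, with suitably separated consecutive
sets and bounded-or-Lipschitz control functions, then `F` is d.c. on `C`. -/
theorem dc_of_exhaustion {X Y : Type*}
    [NormedAddCommGroup X] [NormedSpace ℝ X]
    [NormedAddCommGroup Y] [NormedSpace ℝ Y]
    (C : Set X) (hCne : C.Nonempty) (hCconv : Convex ℝ C)
    (F : X → Y) (D : ℕ → Set X)
    (hDne : ∀ n, (D n).Nonempty) (hDconv : ∀ n, Convex ℝ (D n))
    (hDsub : ∀ n, D n ⊆ C)
    (hDmono : ∀ n, D n ⊆ D (n + 1))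
    (hDunion : (⋃ n, D n) = C)
    (hdist : ∀ n, ∃ ε > (0:ℝ), ∀ a ∈ D n, ∀ b ∈ C \ D (n + 1), ε ≤ ‖a - b‖)
    (hDrelopen : ∀ n, ∃ U : Set X, IsOpen U ∧ D n = U ∩ C)
    (hFdc : ∀ n, ContinuousOn F (D n) ∧ ∃ γ : X → ℝ, IsControlOn (D n) F γ ∧
      ((∃ M : ℝ, ∀ x ∈ D n, |γ x| ≤ M) ∨ (∃ L : NNReal, LipschitzOnWith L γ (D n)))) :
    IsDCOn C F :=
  dc_of_exhaustion_general C hCconv F D hDne hDconv hDmono hDunion hdist hDrelopen hFdc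
end

section
/- Let X be a real normed linear space and C ⊆ X a nonempty open convex set. Let (C_n) be a sequence of convex subsets of C, each with nonempty interior, such that C_n ⊆ C_{n+1} for each n and the union of the C_n equals C. Then there exists a sequence (D_n) of nonempty bounded open convex sets such that: for each n, D_n ⊂⊂ D_{n+1} and D_n ⊂⊂ C_n, and the union of the D_n equals C. -/
open Set Metric Bornology Filter NNReal

private lemma buffer_lemma {X : Type*} [NormedAddCommGroup X] [NormedSpace ℝ X]
    {E : Set X} (hE : Convex ℝ E) {x₀ : X} {r : ℝ}
    (hball : ball x₀ r ⊆ E) {y : X} (hy : y ∈ E) {t : ℝ} (ht0 : 0 < t) (ht1 : t < 1)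
    {w : X} (hw : ‖w‖ < (1 - t) * r) : x₀ + t • (y - x₀) + w ∈ E := by
  have h1t : (0:ℝ) < 1 - t := by linarith
  set w' : X := (1 - t)⁻¹ • w with hw'def
  have hmem : x₀ + w' ∈ ball x₀ r := by
    rw [mem_ball_iff_norm, add_sub_cancel_left, hw'def, norm_smul, Real.norm_eq_abs,
      abs_of_pos (inv_pos.mpr h1t)]
    rw [inv_mul_lt_iff₀ h1t]
    linarith
  have hcomb := hE (hball hmem) hy h1t.le ht0.le (by ring)
  have hwe : (1 - t) • w' = w := smul_inv_smul₀ h1t.ne' w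
  have heq : (1 - t) • (x₀ + w') + t • y = x₀ + t • (y - x₀) + w := by
    rw [← hwe]; module

  rwa [heq] at hcomb


/-- From an increasing sequence of convex sets with nonempty interior
exhausting an open convex set `C`, one can extract bounded open convex sets `D n` with
`D n ⊂⊂ D (n+1)`, `D n ⊂⊂ C n`, exhausting `C`. -/
theorem exists_subsub_exhaustion {X : Type*} [NormedAddCommGroup X] [NormedSpace ℝ X]
    (C : Set X) (hCne : C.Nonempty) (hCopen : IsOpen C) (hCconv : Convex ℝ C)
    (Cs : ℕ → Set X) (hCssub : ∀ n, Cs n ⊆ C)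
    (hCsconv : ∀ n, Convex ℝ (Cs n)) (hCsint : ∀ n, (interior (Cs n)).Nonempty)
    (hCsmono : ∀ n, Cs n ⊆ Cs (n + 1)) (hCsunion : (⋃ n, Cs n) = C) :
    ∃ D : ℕ → Set X,
      (∀ n, (D n).Nonempty ∧ IsBounded (D n) ∧ IsOpen (D n) ∧ Convex ℝ (D n)) ∧
      (∀ n, SubSub (D n) (D (n + 1))) ∧ (∀ n, SubSub (D n) (Cs n)) ∧
      (⋃ n, D n) = C := by
  classical
  obtain ⟨x₀, hx₀⟩ := hCsint 0
  obtain ⟨r, hr, hball⟩ := Metric.isOpen_iff.mp isOpen_interior x₀ hx₀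
  set E : ℕ → Set X := fun n => interior (Cs n) with hEdef
  have hEopen : ∀ n, IsOpen (E n) := fun n => isOpen_interior
  have hEconv : ∀ n, Convex ℝ (E n) := fun n => (hCsconv n).interior
  have hEsub : ∀ n, E n ⊆ Cs n := fun n => interior_subset
  have hCsmono' : Monotone Cs := monotone_nat_of_le_succ (fun n => hCsmono n)
  have hEmono : ∀ m n, m ≤ n → E m ⊆ E n := fun m n h => interior_mono (hCsmono' h)
  have hballE : ∀ n, ball x₀ r ⊆ E n := fun n => hball.trans (hEmono 0 n (Nat.zero_le n))
  have hx₀E : ∀ n, x₀ ∈ E n := fun n => hballE n (mem_ball_self hr)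
  -- the interiors exhaust C
  have hEunion : ∀ x ∈ C, ∃ m, x ∈ E m := by
    intro x hx
    obtain ⟨δ, hδ, hδball⟩ := Metric.isOpen_iff.mp hCopen x hx
    set c : ℝ := δ / (2 * (‖x - x₀‖ + 1)) with hc
    have hR : (0:ℝ) ≤ ‖x - x₀‖ := norm_nonneg _
    have hc0 : 0 < c := by positivity
    set z : X := x + c • (x - x₀) with hz
    have hzC : z ∈ C := by
      apply hδball
      rw [mem_ball_iff_norm, hz, add_sub_cancel_left, norm_smul, Real.norm_eq_abs,
        abs_of_pos hc0]
      have h1 : c * (‖x - x₀‖ + 1) = δ / 2 := by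
        rw [hc]; field_simp
      nlinarith
    rw [← hCsunion] at hzC
    obtain ⟨m, hm⟩ := mem_iUnion.mp hzC
    refine ⟨m, ?_⟩
    have h1c : (0:ℝ) < 1 + c := by linarith
    have hab : c/(1+c) + 1/(1+c) = 1 := by field_simp; ring
    have key := (hCsconv m).combo_interior_self_mem_interior (hx₀E m) hm
      (by positivity) (by positivity) hab
    have hxe : (c/(1+c)) • x₀ + (1/(1+c)) • z = x := by
      rw [hz]
      match_scalars <;> (field_simp; try ring)
    rwa [hxe] at key
  -- the scaling parameters
  set t : ℕ → ℝ := fun n => 1 - ((n:ℝ)+2)⁻¹ with htdef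
  have htinvpos : ∀ n : ℕ, (0:ℝ) < ((n:ℝ)+2)⁻¹ := by intro n; positivity
  have ht0 : ∀ n, 0 < t n := by
    intro n
    have h2 : ((n:ℝ)+2)⁻¹ ≤ (2:ℝ)⁻¹ := by
      apply inv_anti₀ (by norm_num)
      have := Nat.cast_nonneg (α := ℝ) n; linarith
    simp only [htdef]; linarith
  have ht1 : ∀ n, t n < 1 := by
    intro n; simp only [htdef]; linarith [htinvpos n]
  have htmono : ∀ n, t n < t (n+1) := by
    intro n
    simp only [htdef, Nat.cast_add, Nat.cast_one]
    have : ((n:ℝ)+1+2)⁻¹ < ((n:ℝ)+2)⁻¹ := by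
      apply inv_strictAnti₀ (by positivity); linarith
    linarith
  -- the sets
  set D : ℕ → Set X := fun n =>
    (fun z => x₀ + (t n)⁻¹ • (z - x₀)) ⁻¹' (E n ∩ ball x₀ ((n:ℝ)+1)) with hDdef
  have hmemD : ∀ n z, z ∈ D n ↔
      (x₀ + (t n)⁻¹ • (z - x₀) ∈ E n ∧ ‖(t n)⁻¹ • (z - x₀)‖ < (n:ℝ)+1) := by
    intro n z
    simp only [hDdef, mem_preimage, mem_inter_iff, mem_ball_iff_norm, add_sub_cancel_left]
  have hinv : ∀ (n : ℕ) (z : X), z = x₀ + t n • ((x₀ + (t n)⁻¹ • (z - x₀)) - x₀) := by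
    intro n z
    rw [add_sub_cancel_left, smul_inv_smul₀ (ht0 n).ne']
    abel
  refine ⟨D, ?_, ?_, ?_, ?_⟩
  · -- nonempty, bounded, open, convex
    intro n
    refine ⟨⟨x₀, ?_⟩, ?_, ?_, ?_⟩
    · rw [hmemD]
      constructor
      · simpa using hx₀E n
      · simp; positivity
    · apply (isBounded_ball (x := x₀) (r := (n:ℝ)+1)).subset
      intro z hz
      rw [hmemD] at hz
      rw [mem_ball_iff_norm]
      have h1 : ‖z - x₀‖ = t n * ‖(t n)⁻¹ • (z - x₀)‖ := by
        rw [norm_smul, Real.norm_eq_abs, abs_of_pos (inv_pos.mpr (ht0 n))]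
        exact (mul_inv_cancel_left₀ (ht0 n).ne' _).symm
      rw [h1]
      calc t n * ‖(t n)⁻¹ • (z - x₀)‖ ≤ 1 * ‖(t n)⁻¹ • (z - x₀)‖ := by
            apply mul_le_mul_of_nonneg_right (ht1 n).le (norm_nonneg _)
        _ < (n:ℝ)+1 := by rw [one_mul]; exact hz.2
    · apply IsOpen.preimage ?_ ((hEopen n).inter isOpen_ball)
      exact continuous_const.add ((continuous_id.sub continuous_const).const_smul _)
    · intro z1 hz1 z2 hz2 a b ha hb hab
      rw [hmemD] at hz1 hz2 ⊢
      have hb' : b = 1 - a := by linarith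
      subst hb'
      have haff : x₀ + (t n)⁻¹ • (a • z1 + (1-a) • z2 - x₀) =
          a • (x₀ + (t n)⁻¹ • (z1 - x₀)) + (1-a) • (x₀ + (t n)⁻¹ • (z2 - x₀)) := by
        match_scalars <;> ring
      have hmem := ((hEconv n).inter (convex_ball x₀ ((n:ℝ)+1)))
        (x := x₀ + (t n)⁻¹ • (z1 - x₀)) (y := x₀ + (t n)⁻¹ • (z2 - x₀))
        ⟨hz1.1, by rw [mem_ball_iff_norm, add_sub_cancel_left]; exact hz1.2⟩
        ⟨hz2.1, by rw [mem_ball_iff_norm, add_sub_cancel_left]; exact hz2.2⟩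
        ha hb hab
      refine ⟨by rw [haff]; exact hmem.1, ?_⟩
      have h2 := hmem.2
      rw [mem_ball_iff_norm] at h2
      have heq2 : (t n)⁻¹ • (a • z1 + (1-a) • z2 - x₀) =
          (a • (x₀ + (t n)⁻¹ • (z1 - x₀)) + (1-a) • (x₀ + (t n)⁻¹ • (z2 - x₀))) - x₀ := by
        match_scalars <;> ring
      rw [heq2]
      exact h2
  · -- SubSub (D n) (D (n+1))
    intro n
    set s : ℝ := t n / t (n+1) with hsdef
    have hs0 : 0 < s := div_pos (ht0 n) (ht0 (n+1))
    have hs1 : s < 1 := (div_lt_one (ht0 (n+1))).mpr (htmono n)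
    refine ⟨min (t (n+1) * ((1 - s) * r)) (t (n+1)), ?_, ?_⟩
    · apply lt_min
      · exact mul_pos (ht0 (n+1)) (mul_pos (by linarith : (0:ℝ) < 1 - s) hr)
      · exact ht0 (n+1)
    · intro z hz w hw
      rw [hmemD] at hz
      set y : X := x₀ + (t n)⁻¹ • (z - x₀) with hydef
      have hzy : z = x₀ + t n • (y - x₀) := hinv n z
      have hyE : y ∈ E n := hz.1
      have hyb : ‖y - x₀‖ < (n:ℝ)+1 := by
        rw [hydef, add_sub_cancel_left]; exact hz.2
      set w' : X := (t (n+1))⁻¹ • w with hw'def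
      have hw'norm : ‖w'‖ = (t (n+1))⁻¹ * ‖w‖ := by
        rw [hw'def, norm_smul, Real.norm_eq_abs, abs_of_pos (inv_pos.mpr (ht0 (n+1)))]
      have hw1 : ‖w'‖ < (1 - s) * r := by
        rw [hw'norm, inv_mul_lt_iff₀ (ht0 (n+1))]
        calc ‖w‖ < min (t (n+1) * ((1 - s) * r)) (t (n+1)) := hw
          _ ≤ t (n+1) * ((1 - s) * r) := min_le_left _ _
      have hw2 : ‖w'‖ < 1 := by
        rw [hw'norm, inv_mul_lt_iff₀ (ht0 (n+1)), mul_one]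
        exact hw.trans_le (min_le_right _ _)
      rw [hmemD]
      have hkey : x₀ + (t (n+1))⁻¹ • (z + w - x₀) = x₀ + s • (y - x₀) + w' := by
        rw [hzy, hw'def, hsdef]
        match_scalars
        · ring
        · field_simp
        · ring
      constructor
      · rw [hkey]
        exact buffer_lemma (hEconv (n+1)) (hballE (n+1)) (hEmono n (n+1) (by omega) hyE)
          hs0 hs1 hw1
      · have : ‖(t (n+1))⁻¹ • (z + w - x₀)‖ = ‖x₀ + (t (n+1))⁻¹ • (z + w - x₀) - x₀‖ := by
          rw [add_sub_cancel_left]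
        rw [this, hkey]
        have h1 : ‖x₀ + s • (y - x₀) + w' - x₀‖ ≤ ‖s • (y - x₀)‖ + ‖w'‖ := by
          have : x₀ + s • (y - x₀) + w' - x₀ = s • (y - x₀) + w' := by abel
          rw [this]; exact norm_add_le _ _
        have h2 : ‖s • (y - x₀)‖ = s * ‖y - x₀‖ := by
          rw [norm_smul, Real.norm_eq_abs, abs_of_pos hs0]
        have h3 : s * ‖y - x₀‖ < (n:ℝ)+1 := by
          calc s * ‖y - x₀‖ ≤ 1 * ‖y - x₀‖ :=
                mul_le_mul_of_nonneg_right hs1.le (norm_nonneg _)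
            _ < (n:ℝ)+1 := by rw [one_mul]; exact hyb
        push_cast
        linarith
  · -- SubSub (D n) (Cs n)
    intro n
    refine ⟨(1 - t n) * r, by nlinarith [ht1 n], ?_⟩
    intro z hz w hw
    rw [hmemD] at hz
    set y : X := x₀ + (t n)⁻¹ • (z - x₀) with hydef
    have hzy : z = x₀ + t n • (y - x₀) := hinv n z
    rw [hzy]
    exact buffer_lemma (hCsconv n) ((hballE n).trans (hEsub n)) (hEsub n hz.1)
      (ht0 n) (ht1 n) hw
  · -- union equals C
    apply Subset.antisymm
    · apply iUnion_subset
      intro n z hz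
      rw [hmemD] at hz
      set y : X := x₀ + (t n)⁻¹ • (z - x₀) with hydef
      have hzy : z = x₀ + t n • (y - x₀) := hinv n z
      have : z ∈ E n := by
        rw [hzy]
        have heq : x₀ + t n • (y - x₀) = (1 - t n) • x₀ + t n • y := by module
        rw [heq]
        exact (hEconv n) (hx₀E n) hz.1 (by linarith [ht1 n]) (ht0 n).le (by ring)
      exact hCssub n (hEsub n this)
    · intro x hx
      obtain ⟨m, hm⟩ := hEunion x hx
      obtain ⟨δ, hδ, hδball⟩ := Metric.isOpen_iff.mp (hEopen m) x hm
      set R : ℝ := ‖x - x₀‖ with hRdef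
      have hR : 0 ≤ R := norm_nonneg _
      obtain ⟨N, hN⟩ := exists_nat_gt (max (R/δ) (2*R))
      set n : ℕ := max m N with hndef
      have hnm : m ≤ n := le_max_left _ _
      have hnN : (N:ℝ) ≤ (n:ℝ) := by exact_mod_cast le_max_right m N
      have h1 : R/δ < (n:ℝ)+1 := by
        have := (le_max_left (R/δ) (2*R)).trans_lt hN; linarith
      have h2 : 2*R < (n:ℝ)+1 := by
        have := (le_max_right (R/δ) (2*R)).trans_lt hN; linarith
      refine mem_iUnion.mpr ⟨n, ?_⟩
      rw [hmemD]
      have htn : t n = ((n:ℝ)+1)/((n:ℝ)+2) := by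
        simp only [htdef]
        have hn2 : ((n:ℝ)+2) ≠ 0 := by positivity
        field_simp
        ring
      have htval : (t n)⁻¹ = ((n:ℝ)+2)/((n:ℝ)+1) := by rw [htn, inv_div]
      have hval : (t n)⁻¹ - 1 = ((n:ℝ)+1)⁻¹ := by
        rw [htval]
        have hn1 : ((n:ℝ)+1) ≠ 0 := by positivity
        rw [inv_eq_one_div]
        field_simp
        ring
      have hinvle : (t n)⁻¹ ≤ 2 := by
        rw [htval]
        rw [div_le_iff₀ (by positivity : (0:ℝ) < (n:ℝ)+1)]
        linarith
      have hnorm : ‖(t n)⁻¹ • (x - x₀)‖ = (t n)⁻¹ * R := by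
        rw [norm_smul, Real.norm_eq_abs, abs_of_pos (inv_pos.mpr (ht0 n))]
      constructor
      · apply hEmono m n hnm
        apply hδball
        rw [mem_ball_iff_norm]
        have : x₀ + (t n)⁻¹ • (x - x₀) - x = ((t n)⁻¹ - 1) • (x - x₀) := by
          match_scalars <;> ring
        rw [this, norm_smul, Real.norm_eq_abs,
          abs_of_nonneg (by rw [hval]; positivity)]
        rw [hval]
        rw [inv_mul_lt_iff₀ (by positivity : (0:ℝ) < (n:ℝ)+1)]
        rw [← hRdef]
        rcases eq_or_lt_of_le hR with h|h
        · rw [← h]; positivity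
        · calc R = (R/δ) * δ := by field_simp
            _ < ((n:ℝ)+1) * δ := by
              apply mul_lt_mul_of_pos_right h1 hδ
      · rw [hnorm]
        calc (t n)⁻¹ * R ≤ 2 * R := mul_le_mul_of_nonneg_right hinvle hR
          _ < (n:ℝ)+1 := h2
end
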